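/- arXiv:1402.2823 — 4 statements merged into one kernel-verified Lean document; each statement's English description precedes it below -/
import Mathlib

section
/- Decomposition of the Watson statistic: let p ≥ 2 and n ≥ 1 be integers, θ₀ ∈ S^{p−1}, and let x₁,…,xₙ ∈ S^{p−1} satisfy x_i ≠ ±θ₀ for all i. Writing u_i := u(x_i), S_i := S(x_i), x̄ := (1/n) Σ_{i=1}^n x_i, and W := n(p−1) ⟨x̄, (I_p − θ₀θ₀ᵀ) x̄⟩ / (1 − (1/n) Σ_{i=1}^n ⟨x_i,θ₀⟩²), one has the identity W = (p−1) + (2(p−1)/Σ_{i=1}^n u_i²) Σ_{1≤i<j≤n} u_i u_j ⟨S_i,S_j⟩. -/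
/-!
Write `vᵢ := xᵢ - ⟪xᵢ, θ₀⟫ θ₀` for the component of `xᵢ` orthogonal to `θ₀`, so that `‖vᵢ‖ = uᵢ` and
`vᵢ = uᵢ Sᵢ`. Projection commutes with averaging, so the numerator of `W` is
`n (p - 1) ‖(1/n) ∑ vᵢ‖²`, while its denominator is `(1/n) ∑ uᵢ²`. Expanding
`‖∑ vᵢ‖² = ∑ uᵢ² + 2 ∑_{i<j} uᵢ uⱼ ⟪Sᵢ, Sⱼ⟫`, the diagonal part gives the constant `p - 1`.
-/

open Finset
open scoped RealInnerProductSpace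

section InnerProductSpace

variable {E : Type*} [NormedAddCommGroup E] [InnerProductSpace ℝ E]

theorem norm_sub_inner_smul_sq {θ : E} (hθ : ‖θ‖ = 1) (x : E) :
    ‖x - ⟪x, θ⟫ • θ‖ ^ 2 = ‖x‖ ^ 2 - ⟪x, θ⟫ ^ 2 := by
  rw [norm_sub_sq_real, real_inner_smul_right, norm_smul, hθ, mul_one, Real.norm_eq_abs, sq_abs]
  ring

theorem inner_sq_lt_one_of_ne_of_ne_neg {x θ : E} (hx : ‖x‖ = 1) (hθ : ‖θ‖ = 1)
    (hne : x ≠ θ) (hne_neg : x ≠ -θ) : ⟪x, θ⟫ ^ 2 < 1 := by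
  have hlt : ⟪x, θ⟫ < 1 := (inner_lt_one_iff_real_of_norm_eq_one hx hθ).mpr hne
  have hgt : -⟪x, θ⟫ < 1 := by
    simpa only [inner_neg_right] using
      (inner_lt_one_iff_real_of_norm_eq_one hx ((norm_neg θ).trans hθ)).mpr hne_neg
  nlinarith

theorem norm_sub_inner_smul_of_norm_eq_one {x θ : E} (hx : ‖x‖ = 1) (hθ : ‖θ‖ = 1) :
    ‖x - ⟪x, θ⟫ • θ‖ = √(1 - ⟪x, θ⟫ ^ 2) := by
  rw [← Real.sqrt_sq (norm_nonneg (x - _)), norm_sub_inner_smul_sq hθ, hx, one_pow]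

theorem real_inner_eq_norm_mul_norm_mul_inner_normalized (v w : E) :
    ⟪v, w⟫ = ‖v‖ * ‖w‖ * ⟪‖v‖⁻¹ • v, ‖w‖⁻¹ • w⟫ := by
  have rescale (z : E) : ‖z‖ • ‖z‖⁻¹ • z = z := by
    rcases eq_or_ne z 0 with rfl | hz
    · simp
    · exact smul_inv_smul₀ (norm_ne_zero_iff.mpr hz) z
  conv_lhs => rw [← rescale v, ← rescale w, real_inner_smul_left, real_inner_smul_right]
  ring

theorem norm_sq_sub_inner_sq_smul_sum {θ : E} (hθ : ‖θ‖ = 1) (c : ℝ) (s : Finset ℕ)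
    (x : ℕ → E) :
    ‖c • ∑ i ∈ s, x i‖ ^ 2 - ⟪c • ∑ i ∈ s, x i, θ⟫ ^ 2 =
      c ^ 2 * ‖∑ i ∈ s, (x i - ⟪x i, θ⟫ • θ)‖ ^ 2 := by
  rw [← norm_sub_inner_smul_sq hθ, real_inner_smul_left, sum_inner, mul_smul, sum_smul,
    ← smul_sub, ← sum_sub_distrib, norm_smul, mul_pow, Real.norm_eq_abs, sq_abs]

theorem norm_sum_Icc_sq (v : ℕ → E) (n : ℕ) :
    ‖∑ i ∈ Icc 1 n, v i‖ ^ 2 = ∑ i ∈ Icc 1 n, ‖v i‖ ^ 2 +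
      2 * ∑ j ∈ Icc 1 n, ∑ i ∈ Icc 1 (j - 1), ⟪v i, v j⟫ := by
  induction n with
  | zero => simp
  | succ n ih =>
    simp only [sum_Icc_succ_top (Nat.le_add_left 1 n), norm_add_sq_real, ih, sum_inner,
      Nat.add_sub_cancel]
    ring

end InnerProductSpace

theorem statement_6_general
    (p n : ℕ) (hn : 1 ≤ n)
    (θ : EuclideanSpace ℝ (Fin p)) (hθ : ‖θ‖ = 1)
    (x : ℕ → EuclideanSpace ℝ (Fin p))
    (hxsph : ∀ i ∈ Finset.Icc 1 n, ‖x i‖ = 1)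
    (hxne : ∀ i ∈ Finset.Icc 1 n, x i ≠ θ ∧ x i ≠ -θ)
    (u : ℕ → ℝ) (hu : ∀ i, u i = Real.sqrt (1 - ⟪x i, θ⟫ ^ 2))
    (S : ℕ → EuclideanSpace ℝ (Fin p))
    (hS : ∀ i ∈ Finset.Icc 1 n,
      S i = ‖x i - ⟪x i, θ⟫ • θ‖⁻¹ • (x i - ⟪x i, θ⟫ • θ))
    (xbar : EuclideanSpace ℝ (Fin p))
    (hxbar : xbar = (n : ℝ)⁻¹ • ∑ i ∈ Finset.Icc 1 n, x i)
    (W : ℝ)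
    (hW : W = (n : ℝ) * ((p : ℝ) - 1) * (‖xbar‖ ^ 2 - ⟪xbar, θ⟫ ^ 2) /
      (1 - (n : ℝ)⁻¹ * ∑ i ∈ Finset.Icc 1 n, ⟪x i, θ⟫ ^ 2)) :
    W = ((p : ℝ) - 1) +
      (2 * ((p : ℝ) - 1) / ∑ i ∈ Finset.Icc 1 n, (u i) ^ 2) *
        ∑ j ∈ Finset.Icc 1 n, ∑ i ∈ Finset.Icc 1 (j - 1),
          u i * u j * ⟪S i, S j⟫ := by
  have hnorm_perp : ∀ i ∈ Icc 1 n, ‖x i - ⟪x i, θ⟫ • θ‖ = u i := fun i hi => by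
    rw [hu, norm_sub_inner_smul_of_norm_eq_one (hxsph i hi) hθ]
  have hu_sq : ∀ i ∈ Icc 1 n, u i ^ 2 = 1 - ⟪x i, θ⟫ ^ 2 := fun i hi => by
    rw [← hnorm_perp i hi, norm_sub_inner_smul_sq hθ, hxsph i hi, one_pow]
  have hU_pos : 0 < ∑ i ∈ Icc 1 n, u i ^ 2 := by
    refine sum_pos (fun i hi => ?_) (nonempty_Icc.mpr hn)
    rw [hu_sq i hi, sub_pos]
    exact inner_sq_lt_one_of_ne_of_ne_neg (hxsph i hi) hθ (hxne i hi).1 (hxne i hi).2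
  have hnum : ‖xbar‖ ^ 2 - ⟪xbar, θ⟫ ^ 2 = (n : ℝ)⁻¹ ^ 2 * (∑ i ∈ Icc 1 n, u i ^ 2 +
      2 * ∑ j ∈ Icc 1 n, ∑ i ∈ Icc 1 (j - 1), u i * u j * ⟪S i, S j⟫) := by
    rw [hxbar, norm_sq_sub_inner_sq_smul_sum hθ, norm_sum_Icc_sq]
    congr 2
    · exact sum_congr rfl fun i hi => by rw [hnorm_perp i hi]
    · congr 1
      refine sum_congr rfl fun j hj => sum_congr rfl fun i hi => ?_
      have hi' : i ∈ Icc 1 n := by simp only [mem_Icc] at hi hj ⊢; omega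
      rw [real_inner_eq_norm_mul_norm_mul_inner_normalized, ← hS i hi', ← hS j hj,
        hnorm_perp i hi', hnorm_perp j hj]
  have hden : 1 - (n : ℝ)⁻¹ * ∑ i ∈ Icc 1 n, ⟪x i, θ⟫ ^ 2 =
      (n : ℝ)⁻¹ * ∑ i ∈ Icc 1 n, u i ^ 2 := by
    rw [sum_congr rfl hu_sq, sum_sub_distrib, sum_const, Nat.card_Icc, nsmul_eq_mul,
      mul_one, Nat.add_sub_cancel, mul_sub, inv_mul_cancel₀ (by positivity)]
  rw [hW, hnum, hden]
  field_simp

/-- Decomposition of the Watson statistic: for unit vectors `x₁,…,xₙ` on `S^{p−1}` with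
`xᵢ ≠ ±θ₀`, writing `uᵢ = √(1−⟨xᵢ,θ₀⟩²)`, `Sᵢ = (xᵢ−⟨xᵢ,θ₀⟩θ₀)/‖xᵢ−⟨xᵢ,θ₀⟩θ₀‖` and
`x̄ = (1/n)Σxᵢ`, the Watson statistic
`W = n(p−1)⟨x̄,(I−θ₀θ₀ᵀ)x̄⟩/(1−(1/n)Σ⟨xᵢ,θ₀⟩²)` satisfies
`W = (p−1) + (2(p−1)/Σuᵢ²) Σ_{i<j} uᵢuⱼ⟨Sᵢ,Sⱼ⟩`. -/
theorem statement_6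
    (p n : ℕ) (hp : 2 ≤ p) (hn : 1 ≤ n)
    (θ : EuclideanSpace ℝ (Fin p)) (hθ : ‖θ‖ = 1)
    (x : ℕ → EuclideanSpace ℝ (Fin p))
    (hxsph : ∀ i ∈ Finset.Icc 1 n, ‖x i‖ = 1)
    (hxne : ∀ i ∈ Finset.Icc 1 n, x i ≠ θ ∧ x i ≠ -θ)
    (u : ℕ → ℝ) (hu : ∀ i, u i = Real.sqrt (1 - ⟪x i, θ⟫ ^ 2))
    (S : ℕ → EuclideanSpace ℝ (Fin p))
    (hS : ∀ i ∈ Finset.Icc 1 n,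
      S i = ‖x i - ⟪x i, θ⟫ • θ‖⁻¹ • (x i - ⟪x i, θ⟫ • θ))
    (xbar : EuclideanSpace ℝ (Fin p))
    (hxbar : xbar = (n : ℝ)⁻¹ • ∑ i ∈ Finset.Icc 1 n, x i)
    (W : ℝ)
    (hW : W = (n : ℝ) * ((p : ℝ) - 1) * (‖xbar‖ ^ 2 - ⟪xbar, θ⟫ ^ 2) /
      (1 - (n : ℝ)⁻¹ * ∑ i ∈ Finset.Icc 1 n, ⟪x i, θ⟫ ^ 2)) :
    W = ((p : ℝ) - 1) +
      (2 * ((p : ℝ) - 1) / ∑ i ∈ Finset.Icc 1 n, (u i) ^ 2) *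
        ∑ j ∈ Finset.Icc 1 n, ∑ i ∈ Finset.Icc 1 (j - 1),
          u i * u j * ⟪S i, S j⟫ :=
  statement_6_general p n hn θ hθ x hxsph hxne u hu S hS xbar hxbar W hW
end

section
/- In the fixed-sample setup, E[ Σ_{ℓ=2}^n σ²_ℓ ] = (n−1)/n, where σ²_ℓ := E[ Y_ℓ² | X₁,…,X_{ℓ−1} ] and Y_ℓ := (√(2(p−1))/(n E[u₁²])) Σ_{i=1}^{ℓ−1} u_i u_ℓ ⟨S_i,S_ℓ⟩. -/
open MeasureTheory ProbabilityTheory Filter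
open scoped BigOperators RealInnerProductSpace

/-- A Borel probability measure on `ℝ^p` is rotationally symmetric about `θ` if it is invariant
under every orthogonal transformation (linear isometry) of `ℝ^p` fixing `θ`. -/
def RotSym {p : ℕ} (θ : EuclideanSpace ℝ (Fin p)) (μ : Measure (EuclideanSpace ℝ (Fin p))) :
    Prop :=
  ∀ O : EuclideanSpace ℝ (Fin p) ≃ₗᵢ[ℝ] EuclideanSpace ℝ (Fin p), O θ = θ →
    Measure.map O μ = μ

/-! Write `V x = x - ⟪x, θ⟫ • θ`, so that `u_i u_ℓ ⟪S_i, S_ℓ⟫ = ⟪V X_i, V X_ℓ⟫` and `u² = ‖V X‖²`.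
The reflection in the line `ℝ θ` shows that `V X` is centred, and the reflection exchanging two
unit vectors of `θᗮ` fixes `θ`, so `E⟪V X, a⟫² = λ ‖V a‖²`; summing over an orthonormal basis
gives `λ (p - 1) = E[u²]`. Expanding `Y_ℓ²`, the cross terms vanish by independence and
centring, and each diagonal term is `E⟪V X_i, V X_ℓ⟫² = λ E‖V X_ℓ‖² = E[u²]² / (p - 1)`.
Hence `E[σ²_ℓ] = E[Y_ℓ²] = 2 (ℓ - 1) / n²`, which sums to `(n - 1) / n`. -/

section PerpPart

variable {F : Type*} [NormedAddCommGroup F] [InnerProductSpace ℝ F]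

lemma norm_mul_norm_mul_inner_of_normalize {v w s t : F} (hs : v ≠ 0 → s = ‖v‖⁻¹ • v)
    (ht : w ≠ 0 → t = ‖w‖⁻¹ • w) : ‖v‖ * ‖w‖ * ⟪s, t⟫ = ⟪v, w⟫ := by
  rcases eq_or_ne v 0 with rfl | hv
  · simp
  rcases eq_or_ne w 0 with rfl | hw
  · simp
  rw [hs hv, ht hw, real_inner_smul_left, real_inner_smul_right]
  field_simp [norm_ne_zero_iff.2 hv, norm_ne_zero_iff.2 hw]

lemma exists_norm_eq_one_inner_eq_zero [FiniteDimensional ℝ F] (hF : 2 ≤ Module.finrank ℝ F)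
    (θ : F) :
    ∃ v : F, ‖v‖ = 1 ∧ ⟪v, θ⟫ = 0 := by
  have hsum := Submodule.finrank_add_finrank_orthogonal (ℝ ∙ θ)
  have hspan : Module.finrank ℝ (ℝ ∙ θ) ≤ 1 := by
    simpa using finrank_span_le_card (R := ℝ) ({θ} : Set F)
  have : Nontrivial (ℝ ∙ θ)ᗮ := Module.finrank_pos_iff (R := ℝ).1 (by omega)
  obtain ⟨⟨v, hvθ⟩, hv⟩ := exists_ne (0 : (ℝ ∙ θ)ᗮ)
  have hv : v ≠ 0 := by simpa using hv
  refine ⟨‖v‖⁻¹ • v, ?_, ?_⟩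
  · rw [norm_smul, norm_inv, norm_norm, inv_mul_cancel₀ (norm_ne_zero_iff.2 hv)]
  · rw [real_inner_smul_left, Submodule.mem_orthogonal_singleton_iff_inner_left.1 hvθ, mul_zero]

noncomputable def perpPart (θ x : F) : F := x - ⟪x, θ⟫ • θ

variable {θ : F}

lemma inner_perpPart_self (hθ : ‖θ‖ = 1) (x : F) : ⟪perpPart θ x, θ⟫ = 0 := by
  rw [perpPart, inner_sub_left, real_inner_smul_left, real_inner_self_eq_norm_sq, hθ]
  ring

lemma inner_perpPart_perpPart (hθ : ‖θ‖ = 1) (x v : F) :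
    ⟪perpPart θ x, perpPart θ v⟫ = ⟪perpPart θ x, v⟫ := by
  rw [show perpPart θ v = v - ⟪v, θ⟫ • θ from rfl, inner_sub_right, real_inner_smul_right,
    inner_perpPart_self hθ, mul_zero, sub_zero]

lemma perpPart_map (O : F ≃ₗᵢ[ℝ] F) (hO : O θ = θ) (x : F) :
    perpPart θ (O x) = O (perpPart θ x) := by
  conv_lhs => rw [← hO]
  rw [perpPart, perpPart, O.inner_map_map, map_sub, map_smul, hO]

lemma norm_perpPart_sq (hθ : ‖θ‖ = 1) (x : F) :
    ‖perpPart θ x‖ ^ 2 = ‖x‖ ^ 2 - ⟪x, θ⟫ ^ 2 := by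
  rw [perpPart, norm_sub_sq_real, real_inner_smul_right, norm_smul, hθ, Real.norm_eq_abs,
    mul_one, sq_abs]
  ring

lemma norm_perpPart_le (hθ : ‖θ‖ = 1) (x : F) : ‖perpPart θ x‖ ≤ ‖x‖ :=
  pow_le_pow_iff_left₀ (norm_nonneg _) (norm_nonneg _) two_ne_zero |>.1 <| by
    rw [norm_perpPart_sq hθ]; nlinarith [sq_nonneg ⟪x, θ⟫]

@[fun_prop]
lemma continuous_perpPart (θ : F) : Continuous (perpPart θ) := by
  unfold perpPart; fun_prop

lemma sqrt_one_sub_inner_sq (hθ : ‖θ‖ = 1) {x : F} (hx : ‖x‖ = 1) :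
    √(1 - ⟪x, θ⟫ ^ 2) = ‖perpPart θ x‖ := by
  rw [← one_pow 2, ← hx, ← norm_perpPart_sq hθ, Real.sqrt_sq (norm_nonneg _)]

lemma sqrt_mul_sqrt_mul_inner_eq_inner_perpPart (hθ : ‖θ‖ = 1) {S : F → F}
    (hS : ∀ x, perpPart θ x ≠ 0 → S x = ‖perpPart θ x‖⁻¹ • perpPart θ x) {a b : F}
    (ha : ‖a‖ = 1) (hb : ‖b‖ = 1) :
    √(1 - ⟪a, θ⟫ ^ 2) * √(1 - ⟪b, θ⟫ ^ 2) * ⟪S a, S b⟫ = ⟪perpPart θ a, perpPart θ b⟫ := by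
  rw [sqrt_one_sub_inner_sq hθ ha, sqrt_one_sub_inner_sq hθ hb]
  exact norm_mul_norm_mul_inner_of_normalize (hS a) (hS b)

lemma abs_inner_perpPart_le_one {x z : F} (hθ : ‖θ‖ = 1) (hx : ‖x‖ ≤ 1) (hz : ‖z‖ ≤ 1) :
    |⟪perpPart θ x, perpPart θ z⟫| ≤ 1 :=
  (abs_real_inner_le_norm _ _).trans <| mul_le_one₀ ((norm_perpPart_le hθ x).trans hx)
    (norm_nonneg _) ((norm_perpPart_le hθ z).trans hz)

end PerpPart

section RotSym

variable {p : ℕ} {θ : EuclideanSpace ℝ (Fin p)} {μ : Measure (EuclideanSpace ℝ (Fin p))}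

local notation "E" => EuclideanSpace ℝ (Fin p)

lemma integrable_inner_perpPart_sq [IsFiniteMeasure μ] (hθ : ‖θ‖ = 1)
    (hμ : ∀ᵐ x ∂μ, ‖x‖ ≤ 1) (w : E) : Integrable (fun x => ⟪perpPart θ x, w⟫ ^ 2) μ := by
  refine .of_bound (by fun_prop) (‖w‖ ^ 2) ?_
  filter_upwards [hμ] with x hx
  rw [norm_pow, Real.norm_eq_abs, ← abs_pow, abs_of_nonneg (sq_nonneg _)]
  calc ⟪perpPart θ x, w⟫ ^ 2 ≤ (‖perpPart θ x‖ * ‖w‖) ^ 2 := by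
        rw [← sq_abs]; gcongr; exact abs_real_inner_le_norm _ _
    _ ≤ (1 * ‖w‖) ^ 2 := by gcongr; exact (norm_perpPart_le hθ x).trans hx
    _ = ‖w‖ ^ 2 := by rw [one_mul]

lemma RotSym.integral_comp (h : RotSym θ μ) (O : E ≃ₗᵢ[ℝ] E) (hO : O θ = θ) (f : E → ℝ) :
    ∫ x, f (O x) ∂μ = ∫ x, f x ∂μ := by
  conv_rhs => rw [← h O hO]
  exact (integral_map_equiv O.toHomeomorph.toMeasurableEquiv f).symm

lemma RotSym.integral_inner_perpPart (h : RotSym θ μ) (hθ : ‖θ‖ = 1) (w : E) :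
    ∫ x, ⟪perpPart θ x, w⟫ ∂μ = 0 := by
  set O := Submodule.reflection (ℝ ∙ θ)
  have hOθ : O θ = θ :=
    Submodule.reflection_mem_subspace_eq_self (Submodule.mem_span_singleton_self θ)
  have hneg (x : E) : perpPart θ (O x) = -perpPart θ x := by
    rw [perpPart_map O hOθ, Submodule.reflection_mem_subspace_orthogonalComplement_eq_neg
      (Submodule.mem_orthogonal_singleton_iff_inner_left.2 (inner_perpPart_self hθ x))]
  have := h.integral_comp O hOθ (fun x => ⟪perpPart θ x, w⟫)
  simp only [hneg, inner_neg_left, integral_neg] at this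
  linarith

lemma RotSym.integral_inner_perpPart_sq_congr (h : RotSym θ μ) {a b : E} (ha : ‖a‖ = 1)
    (hb : ‖b‖ = 1) (haθ : ⟪a, θ⟫ = 0) (hbθ : ⟪b, θ⟫ = 0) :
    ∫ x, ⟪perpPart θ x, a⟫ ^ 2 ∂μ = ∫ x, ⟪perpPart θ x, b⟫ ^ 2 ∂μ := by
  set O := Submodule.reflection (ℝ ∙ (a - b))ᗮ
  have hOθ : O θ = θ := Submodule.reflection_mem_subspace_eq_self
    (Submodule.mem_orthogonal_singleton_iff_inner_left.2 (by rw [inner_sub_right,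
      real_inner_comm, haθ, real_inner_comm, hbθ, sub_zero]))
  have hOa : O a = b := Submodule.reflection_sub (ha.trans hb.symm)
  conv_rhs => rw [← h.integral_comp O hOθ]
  congr with x
  rw [perpPart_map O hOθ, ← hOa, O.inner_map_map]

lemma RotSym.integral_inner_perpPart_sq_eq_mul (h : RotSym θ μ) (hθ : ‖θ‖ = 1) {v : E}
    (hv : ‖v‖ = 1) (hvθ : ⟪v, θ⟫ = 0) (a : E) :
    ∫ x, ⟪perpPart θ x, a⟫ ^ 2 ∂μ =
      (∫ x, ⟪perpPart θ x, v⟫ ^ 2 ∂μ) * ‖perpPart θ a‖ ^ 2 := by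
  simp_rw [← inner_perpPart_perpPart hθ _ a]
  rcases eq_or_ne (perpPart θ a) 0 with ha | ha
  · simp [ha]
  have hna : ‖perpPart θ a‖ ≠ 0 := norm_ne_zero_iff.2 ha
  set a' := ‖perpPart θ a‖⁻¹ • perpPart θ a
  have ha' : ‖a'‖ = 1 := by rw [norm_smul, norm_inv, norm_norm, inv_mul_cancel₀ hna]
  have ha'θ : ⟪a', θ⟫ = 0 := by rw [real_inner_smul_left, inner_perpPart_self hθ, mul_zero]
  have hscale (x : E) :
      ⟪perpPart θ x, perpPart θ a⟫ ^ 2 = ‖perpPart θ a‖ ^ 2 * ⟪perpPart θ x, a'⟫ ^ 2 := by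
    rw [real_inner_smul_right]; field_simp
  simp_rw [hscale, integral_const_mul, h.integral_inner_perpPart_sq_congr ha' hv ha'θ hvθ]
  ring

lemma RotSym.integral_inner_perpPart_sq [IsFiniteMeasure μ] (h : RotSym θ μ) (hθ : ‖θ‖ = 1)
    (hp : 2 ≤ p) (hμ : ∀ᵐ x ∂μ, ‖x‖ ≤ 1) (a : E) :
    ∫ x, ⟪perpPart θ x, a⟫ ^ 2 ∂μ =
      (∫ x, ‖perpPart θ x‖ ^ 2 ∂μ) / (p - 1) * ‖perpPart θ a‖ ^ 2 := by
  obtain ⟨v, hv, hvθ⟩ := exists_norm_eq_one_inner_eq_zero (by simpa using hp) θ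
  set c := ∫ x, ⟪perpPart θ x, v⟫ ^ 2 ∂μ
  let b := EuclideanSpace.basisFun (Fin p) ℝ
  have htrace : ∫ x, ‖perpPart θ x‖ ^ 2 ∂μ = c * (p - 1) := calc
    _ = ∫ x, ∑ k, ⟪perpPart θ x, b k⟫ ^ 2 ∂μ := by simp_rw [b.sum_sq_inner_left]
    _ = ∑ k, c * ‖perpPart θ (b k)‖ ^ 2 := by
      rw [integral_finsetSum _ fun k _ => integrable_inner_perpPart_sq hθ hμ (b k)]
      exact Finset.sum_congr rfl fun k _ => h.integral_inner_perpPart_sq_eq_mul hθ hv hvθ (b k)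
    _ = c * (p - ‖θ‖ ^ 2) := by
      rw [← Finset.mul_sum]
      simp_rw [norm_perpPart_sq hθ, b.orthonormal.1]
      rw [Finset.sum_sub_distrib, b.sum_sq_inner_right]
      simp
    _ = c * (p - 1) := by rw [hθ, one_pow]
  have hp1 : (p : ℝ) - 1 ≠ 0 := by
    have : (2 : ℝ) ≤ p := by exact_mod_cast hp
    linarith
  rw [htrace, mul_div_cancel_right₀ _ hp1, h.integral_inner_perpPart_sq_eq_mul hθ hv hvθ]

end RotSym

lemma ProbabilityTheory.IndepFun.integral_comp_eq_integral_integral {Ω α β G : Type*}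
    [MeasurableSpace Ω] [MeasurableSpace α] [MeasurableSpace β] [NormedAddCommGroup G]
    [NormedSpace ℝ G] {P : Measure Ω} [IsFiniteMeasure P] {X : Ω → α} {Z : Ω → β}
    (h : IndepFun X Z P) (hX : Measurable X) (hZ : Measurable Z) {f : α → β → G}
    (hf : AEStronglyMeasurable (Function.uncurry f) ((P.map X).prod (P.map Z)))
    (hint : Integrable (fun ω => f (X ω) (Z ω)) P) :
    ∫ ω, f (X ω) (Z ω) ∂P = ∫ x, ∫ z, f x z ∂(P.map Z) ∂(P.map X) := by
  have hXZ : AEMeasurable (fun ω => (X ω, Z ω)) P := (hX.prodMk hZ).aemeasurable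
  have hmap := (indepFun_iff_map_prod_eq_prod_map_map hX.aemeasurable hZ.aemeasurable).1 h
  have hf' : AEStronglyMeasurable (Function.uncurry f) (P.map fun ω => (X ω, Z ω)) :=
    hmap ▸ hf
  refine (integral_map hXZ hf').symm.trans ?_
  rw [hmap]
  exact integral_prod _ (hmap ▸ (integrable_map_measure hf' hXZ).2 hint)

section Reindex

variable {Ω β : Type*} [MeasurableSpace Ω] [MeasurableSpace β] {P : Measure Ω} {n : ℕ}
  {X : ℕ → Ω → β}

lemma indepFun_of_iIndepFun_fin_succ (h : iIndepFun (fun i : Fin n => X (i + 1)) P) {i j : ℕ}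
    (hi : 1 ≤ i) (hin : i ≤ n) (hj : 1 ≤ j) (hjn : j ≤ n) (hij : i ≠ j) :
    IndepFun (X i) (X j) P := by
  obtain ⟨i, rfl⟩ : ∃ k, i = k + 1 := ⟨i - 1, by omega⟩
  obtain ⟨j, rfl⟩ : ∃ k, j = k + 1 := ⟨j - 1, by omega⟩
  exact h.indepFun (i := ⟨i, by omega⟩) (j := ⟨j, by omega⟩) (by simpa [Fin.ext_iff] using hij)

lemma indepFun_prodMk_of_iIndepFun_fin_succ (h : iIndepFun (fun i : Fin n => X (i + 1)) P)
    (hmeas : ∀ i, 1 ≤ i → i ≤ n → Measurable (X i)) {i j k : ℕ} (hi : 1 ≤ i) (hin : i ≤ n)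
    (hj : 1 ≤ j) (hjn : j ≤ n) (hk : 1 ≤ k) (hkn : k ≤ n) (hik : i ≠ k) (hjk : j ≠ k) :
    IndepFun (fun ω => (X i ω, X j ω)) (X k) P := by
  obtain ⟨i, rfl⟩ : ∃ a, i = a + 1 := ⟨i - 1, by omega⟩
  obtain ⟨j, rfl⟩ : ∃ a, j = a + 1 := ⟨j - 1, by omega⟩
  obtain ⟨k, rfl⟩ : ∃ a, k = a + 1 := ⟨k - 1, by omega⟩
  exact h.indepFun_prodMk (fun a => hmeas _ (by omega) (by omega)) ⟨i, by omega⟩ ⟨j, by omega⟩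
    ⟨k, by omega⟩ (by simpa [Fin.ext_iff] using hik) (by simpa [Fin.ext_iff] using hjk)

end Reindex

section Sample

variable {Ω : Type*} [MeasurableSpace Ω] {P : Measure Ω} {p : ℕ}
  {θ : EuclideanSpace ℝ (Fin p)} {μ : Measure (EuclideanSpace ℝ (Fin p))}

local notation "E" => EuclideanSpace ℝ (Fin p)

lemma integrable_inner_perpPart_mul [IsFiniteMeasure P] (hθ : ‖θ‖ = 1) {X Z W V : Ω → E}
    (hX : Measurable X) (hZ : Measurable Z) (hW : Measurable W) (hV : Measurable V)
    (hXb : ∀ ω, ‖X ω‖ ≤ 1) (hZb : ∀ ω, ‖Z ω‖ ≤ 1) (hWb : ∀ ω, ‖W ω‖ ≤ 1)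
    (hVb : ∀ ω, ‖V ω‖ ≤ 1) :
    Integrable (fun ω =>
      ⟪perpPart θ (X ω), perpPart θ (Z ω)⟫ * ⟪perpPart θ (W ω), perpPart θ (V ω)⟫) P := by
  refine .of_bound (by fun_prop) 1 (.of_forall fun ω => ?_)
  rw [norm_mul, Real.norm_eq_abs, Real.norm_eq_abs]
  exact mul_le_one₀ (abs_inner_perpPart_le_one hθ (hXb ω) (hZb ω)) (abs_nonneg _)
    (abs_inner_perpPart_le_one hθ (hWb ω) (hVb ω))

lemma integral_inner_perpPart_sq_of_indepFun [IsProbabilityMeasure P] {X Z : Ω → E}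
    (hXZ : IndepFun X Z P) (hX : Measurable X) (hZ : Measurable Z) (hXb : ∀ ω, ‖X ω‖ ≤ 1)
    (hZb : ∀ ω, ‖Z ω‖ ≤ 1) (hXμ : P.map X = μ) (hZμ : P.map Z = μ) (hrot : RotSym θ μ)
    (hθ : ‖θ‖ = 1) (hp : 2 ≤ p) :
    ∫ ω, ⟪perpPart θ (X ω), perpPart θ (Z ω)⟫ ^ 2 ∂P =
      (∫ x, ‖perpPart θ x‖ ^ 2 ∂μ) ^ 2 / (p - 1) := by
  have : IsProbabilityMeasure μ := hZμ ▸ Measure.isProbabilityMeasure_map hZ.aemeasurable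
  have hμ : ∀ᵐ x ∂μ, ‖x‖ ≤ 1 := hZμ ▸ (ae_map_iff hZ.aemeasurable
    (measurableSet_le (by fun_prop) (by fun_prop))).2 (.of_forall hZb)
  have hint : Integrable (fun ω => ⟪perpPart θ (X ω), perpPart θ (Z ω)⟫ ^ 2) P := by
    simpa only [sq] using integrable_inner_perpPart_mul hθ hX hZ hX hZ hXb hZb hXb hZb
  have hswap (x z : E) : ⟪perpPart θ x, perpPart θ z⟫ ^ 2 = ⟪perpPart θ z, x⟫ ^ 2 := by
    rw [real_inner_comm, inner_perpPart_perpPart hθ]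
  refine (hXZ.integral_comp_eq_integral_integral hX hZ
    (f := fun x z => ⟪perpPart θ x, perpPart θ z⟫ ^ 2) (by fun_prop) hint).trans ?_
  simp_rw [hXμ, hZμ, hswap, hrot.integral_inner_perpPart_sq hθ hp hμ, integral_const_mul]
  ring

lemma integral_inner_perpPart_mul_eq_zero [IsFiniteMeasure P] {X W Z : Ω → E}
    (h : IndepFun (fun ω => (W ω, Z ω)) X P) (hX : Measurable X) (hW : Measurable W)
    (hZ : Measurable Z) (hXb : ∀ ω, ‖X ω‖ ≤ 1) (hWb : ∀ ω, ‖W ω‖ ≤ 1) (hZb : ∀ ω, ‖Z ω‖ ≤ 1)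
    (hXμ : P.map X = μ) (hrot : RotSym θ μ) (hθ : ‖θ‖ = 1) :
    ∫ ω, ⟪perpPart θ (X ω), perpPart θ (Z ω)⟫ * ⟪perpPart θ (W ω), perpPart θ (Z ω)⟫ ∂P = 0 := by
  refine (h.integral_comp_eq_integral_integral (hW.prodMk hZ) hX
    (f := fun q x => ⟪perpPart θ x, perpPart θ q.2⟫ * ⟪perpPart θ q.1, perpPart θ q.2⟫)
    (by fun_prop) (integrable_inner_perpPart_mul hθ hX hZ hW hZ hXb hZb hWb hZb)).trans ?_
  simp_rw [integral_mul_const, hXμ, hrot.integral_inner_perpPart hθ, zero_mul, integral_zero]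

lemma integral_sum_inner_perpPart_sq [IsProbabilityMeasure P] {n : ℕ} {X : ℕ → Ω → E}
    (hXmeas : ∀ i, 1 ≤ i → i ≤ n → Measurable (X i))
    (hXb : ∀ i, 1 ≤ i → i ≤ n → ∀ ω, ‖X i ω‖ ≤ 1)
    (hXindep : iIndepFun (fun i : Fin n => X (i + 1)) P)
    (hXμ : ∀ i, 1 ≤ i → i ≤ n → P.map (X i) = μ) (hrot : RotSym θ μ) (hθ : ‖θ‖ = 1)
    (hp : 2 ≤ p) {ℓ : ℕ} (hℓ : ℓ ≤ n) :
    ∫ ω, (∑ i ∈ Finset.Icc 1 (ℓ - 1), ⟪perpPart θ (X i ω), perpPart θ (X ℓ ω)⟫) ^ 2 ∂P =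
      (ℓ - 1 : ℕ) * ((∫ x, ‖perpPart θ x‖ ^ 2 ∂μ) ^ 2 / (p - 1)) := by
  set s := Finset.Icc 1 (ℓ - 1)
  set c := (∫ x, ‖perpPart θ x‖ ^ 2 ∂μ) ^ 2 / (p - 1)
  have hs : ∀ i ∈ s, 1 ≤ i ∧ i < ℓ := fun i hi => by
    simp only [s, Finset.mem_Icc] at hi; omega
  have hint : ∀ i ∈ s, ∀ j ∈ s, Integrable (fun ω =>
      ⟪perpPart θ (X i ω), perpPart θ (X ℓ ω)⟫ * ⟪perpPart θ (X j ω), perpPart θ (X ℓ ω)⟫) P := by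
    intro i hi j hj
    obtain ⟨hi1, hiℓ⟩ := hs i hi
    obtain ⟨hj1, hjℓ⟩ := hs j hj
    exact integrable_inner_perpPart_mul hθ (hXmeas i hi1 (by omega))
      (hXmeas ℓ (by omega) hℓ) (hXmeas j hj1 (by omega)) (hXmeas ℓ (by omega) hℓ)
      (hXb i hi1 (by omega)) (hXb ℓ (by omega) hℓ) (hXb j hj1 (by omega)) (hXb ℓ (by omega) hℓ)
  have hterm : ∀ i ∈ s, ∀ j ∈ s, ∫ ω,
      ⟪perpPart θ (X i ω), perpPart θ (X ℓ ω)⟫ * ⟪perpPart θ (X j ω), perpPart θ (X ℓ ω)⟫ ∂P =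
        if i = j then c else 0 := by
    intro i hi j hj
    obtain ⟨hi1, hiℓ⟩ := hs i hi
    obtain ⟨hj1, hjℓ⟩ := hs j hj
    split_ifs with hij
    · subst hij
      simp_rw [← sq]
      exact integral_inner_perpPart_sq_of_indepFun
        (indepFun_of_iIndepFun_fin_succ hXindep hi1 (by omega) (by omega) hℓ (by omega))
        (hXmeas i hi1 (by omega)) (hXmeas ℓ (by omega) hℓ) (hXb i hi1 (by omega))
        (hXb ℓ (by omega) hℓ) (hXμ i hi1 (by omega)) (hXμ ℓ (by omega) hℓ) hrot hθ hp
    · exact integral_inner_perpPart_mul_eq_zero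
        (indepFun_prodMk_of_iIndepFun_fin_succ hXindep hXmeas hj1 (by omega) (by omega) hℓ
          hi1 (by omega) (Ne.symm hij) (by omega))
        (hXmeas i hi1 (by omega)) (hXmeas j hj1 (by omega)) (hXmeas ℓ (by omega) hℓ)
        (hXb i hi1 (by omega)) (hXb j hj1 (by omega)) (hXb ℓ (by omega) hℓ)
        (hXμ i hi1 (by omega)) hrot hθ
  simp_rw [sq, Finset.sum_mul_sum]
  rw [integral_finsetSum _ fun i hi => integrable_finsetSum _ (hint i hi)]
  rw [Finset.sum_congr rfl fun i hi =>
    (integral_finsetSum _ (hint i hi)).trans (Finset.sum_congr rfl (hterm i hi))]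
  rw [Finset.sum_congr rfl fun i hi => by rw [Finset.sum_ite_eq, if_pos hi], Finset.sum_const,
    Nat.card_Icc, Nat.add_sub_cancel, nsmul_eq_mul]

end Sample

lemma sum_Icc_two_sub_one (n : ℕ) :
    ∑ ℓ ∈ Finset.Icc 2 n, ((ℓ - 1 : ℕ) : ℝ) = n * (n - 1) / 2 := by
  induction n with
  | zero => simp
  | succ n ih =>
    rcases Nat.eq_zero_or_pos n with rfl | hn
    · simp
    · rw [Finset.sum_Icc_succ_top (by omega), ih, Nat.add_sub_cancel]
      push_cast
      ring

theorem statement_10_general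
    {Ω : Type*} [MeasurableSpace Ω] (P : Measure Ω) [IsProbabilityMeasure P]
    (p n : ℕ) (hp : 2 ≤ p) (hn : 2 ≤ n)
    (θ : EuclideanSpace ℝ (Fin p)) (hθ : ‖θ‖ = 1)
    -- the observations `X i`, `1 ≤ i ≤ n`
    (X : ℕ → Ω → EuclideanSpace ℝ (Fin p))
    (hXmeas : ∀ i, 1 ≤ i → i ≤ n → Measurable (X i))
    (hXsph : ∀ i, 1 ≤ i → i ≤ n → ∀ ω, ‖X i ω‖ = 1)
    -- i.i.d. observations with common rotationally symmetric distribution about `θ`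
    (hXindep : iIndepFun
      (fun i : Fin n => X ((i : ℕ) + 1)) P)
    (hXid : ∀ i, 1 ≤ i → i ≤ n → Measure.map (X i) P = Measure.map (X 1) P)
    (hXrot : RotSym θ (Measure.map (X 1) P))
    -- the sign map `Sg`: a fixed measurable choice, equal to the normalized projection of `x`
    -- on the orthogonal complement of `θ` whenever `x ≠ ±θ`
    (Sg : EuclideanSpace ℝ (Fin p) → EuclideanSpace ℝ (Fin p))
    (hSg : ∀ x, x - ⟪x, θ⟫ • θ ≠ 0 →
      Sg x = ‖x - ⟪x, θ⟫ • θ‖⁻¹ • (x - ⟪x, θ⟫ • θ))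
    -- `u i ω = u(X_i(ω))`
    (u : ℕ → Ω → ℝ)
    (hu : ∀ i ω, u i ω = Real.sqrt (1 - ⟪X i ω, θ⟫ ^ 2))
    -- the moment `E[u₁²]`
    (Eu2 : ℝ)
    (hEu2 : Eu2 = ∫ ω, (u 1 ω) ^ 2 ∂P)
    (hEu2pos : 0 < Eu2)
    -- the martingale differences `Y_ℓ`
    (Y : ℕ → Ω → ℝ)
    (hY : ∀ ℓ ω, Y ℓ ω =
      Real.sqrt (2 * ((p : ℝ) - 1)) / (n * Eu2) *
        ∑ i ∈ Finset.Icc 1 (ℓ - 1),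
          u i ω * u ℓ ω * ⟪Sg (X i ω), Sg (X ℓ ω)⟫)
    -- the σ-algebra generated by `X₁,…,X_{ℓ−1}`
    (𝔪 : ℕ → MeasurableSpace Ω)
    (h𝔪 : ∀ ℓ, 𝔪 ℓ = ⨆ i ∈ Finset.Icc 1 (ℓ - 1),
      MeasurableSpace.comap (X i) inferInstance)
    -- the conditional variances `σ²_ℓ = E[Y_ℓ² | X₁,…,X_{ℓ−1}]`
    (σsq : ℕ → Ω → ℝ)
    (hσsq : ∀ ℓ, σsq ℓ = P[fun ω => (Y ℓ ω) ^ 2 | 𝔪 ℓ]) :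
    ∫ ω, (∑ ℓ ∈ Finset.Icc 2 n, σsq ℓ ω) ∂P = ((n : ℝ) - 1) / n := by
  have hn1 : 1 ≤ n := by omega
  have hp1 : (0 : ℝ) < p - 1 := by
    have : (2 : ℝ) ≤ p := by exact_mod_cast hp
    linarith
  have hEu2μ : Eu2 = ∫ x, ‖perpPart θ x‖ ^ 2 ∂(P.map (X 1)) := by
    rw [hEu2, integral_map (hXmeas 1 le_rfl hn1).aemeasurable (by fun_prop)]
    congr with ω
    rw [hu, sqrt_one_sub_inner_sq hθ (hXsph 1 le_rfl hn1 ω)]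
  have hYsq : ∀ ℓ ∈ Finset.Icc 2 n, ∫ ω, Y ℓ ω ^ 2 ∂P = 2 * (ℓ - 1 : ℕ) / n ^ 2 := by
    intro ℓ hℓ
    obtain ⟨hℓ2, hℓn⟩ := Finset.mem_Icc.1 hℓ
    have hYperp (ω : Ω) : Y ℓ ω = √(2 * ((p : ℝ) - 1)) / (n * Eu2) *
        ∑ i ∈ Finset.Icc 1 (ℓ - 1), ⟪perpPart θ (X i ω), perpPart θ (X ℓ ω)⟫ := by
      rw [hY]
      refine congrArg _ (Finset.sum_congr rfl fun i hi => ?_)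
      have hi := Finset.mem_Icc.1 hi
      rw [hu, hu]
      exact sqrt_mul_sqrt_mul_inner_eq_inner_perpPart hθ hSg (hXsph i hi.1 (by omega) ω)
        (hXsph ℓ (by omega) hℓn ω)
    simp_rw [hYperp, mul_pow, integral_const_mul, integral_sum_inner_perpPart_sq hXmeas
      (fun i hi hin ω => (hXsph i hi hin ω).le) hXindep hXid hXrot hθ hp hℓn, ← hEu2μ, div_pow,
      Real.sq_sqrt (by positivity : (0 : ℝ) ≤ 2 * (p - 1))]
    field_simp
  have hσ : ∀ ℓ ∈ Finset.Icc 2 n, ∫ ω, σsq ℓ ω ∂P = ∫ ω, Y ℓ ω ^ 2 ∂P := by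
    intro ℓ hℓ
    have hℓn := (Finset.mem_Icc.1 hℓ).2
    have h𝔪le : 𝔪 ℓ ≤ ‹MeasurableSpace Ω› := h𝔪 ℓ ▸ iSup₂_le fun i hi =>
      (hXmeas i (Finset.mem_Icc.1 hi).1 (by have := (Finset.mem_Icc.1 hi).2; omega)).comap_le
    rw [hσsq, integral_condExp h𝔪le]
  rw [integral_finsetSum _ fun ℓ _ => hσsq ℓ ▸ integrable_condExp,
    Finset.sum_congr rfl fun ℓ hℓ => (hσ ℓ hℓ).trans (hYsq ℓ hℓ), ← Finset.sum_div,
    ← Finset.mul_sum, sum_Icc_two_sub_one]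
  field_simp

/-- In the fixed-sample setup, `E[Σ_{ℓ=2}^n σ²_ℓ] = (n−1)/n`, where
`σ²_ℓ = E[Y_ℓ² | X₁,…,X_{ℓ−1}]`. -/
theorem statement_10
    {Ω : Type*} [MeasurableSpace Ω] (P : Measure Ω) [IsProbabilityMeasure P]
    (p n : ℕ) (hp : 2 ≤ p) (hn : 2 ≤ n)
    (θ : EuclideanSpace ℝ (Fin p)) (hθ : ‖θ‖ = 1)
    -- the observations `X i`, `1 ≤ i ≤ n`
    (X : ℕ → Ω → EuclideanSpace ℝ (Fin p))
    (hXmeas : ∀ i, 1 ≤ i → i ≤ n → Measurable (X i))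
    (hXsph : ∀ i, 1 ≤ i → i ≤ n → ∀ ω, ‖X i ω‖ = 1)
    -- i.i.d. observations with common rotationally symmetric distribution about `θ`
    (hXindep : iIndepFun
      (fun i : Fin n => X ((i : ℕ) + 1)) P)
    (hXid : ∀ i, 1 ≤ i → i ≤ n → Measure.map (X i) P = Measure.map (X 1) P)
    (hXrot : RotSym θ (Measure.map (X 1) P))
    -- the sign map `Sg`: a fixed measurable choice, equal to the normalized projection of `x`
    -- on the orthogonal complement of `θ` whenever `x ≠ ±θ`
    (Sg : EuclideanSpace ℝ (Fin p) → EuclideanSpace ℝ (Fin p))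
    (hSgmeas : Measurable Sg)
    (hSg : ∀ x, x - ⟪x, θ⟫ • θ ≠ 0 →
      Sg x = ‖x - ⟪x, θ⟫ • θ‖⁻¹ • (x - ⟪x, θ⟫ • θ))
    (hSgunit : ∀ x, ‖Sg x‖ = 1)
    (hSgperp : ∀ x, ⟪Sg x, θ⟫ = 0)
    -- `u i ω = u(X_i(ω))`
    (u : ℕ → Ω → ℝ)
    (hu : ∀ i ω, u i ω = Real.sqrt (1 - ⟪X i ω, θ⟫ ^ 2))
    -- the moments `E[u₁²]` and `E[u₁⁴]`
    (Eu2 Eu4 : ℝ)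
    (hEu2 : Eu2 = ∫ ω, (u 1 ω) ^ 2 ∂P)
    (hEu4 : Eu4 = ∫ ω, (u 1 ω) ^ 4 ∂P)
    (hEu2pos : 0 < Eu2)
    -- the martingale differences `Y_ℓ`
    (Y : ℕ → Ω → ℝ)
    (hY : ∀ ℓ ω, Y ℓ ω =
      Real.sqrt (2 * ((p : ℝ) - 1)) / (n * Eu2) *
        ∑ i ∈ Finset.Icc 1 (ℓ - 1),
          u i ω * u ℓ ω * ⟪Sg (X i ω), Sg (X ℓ ω)⟫)
    -- the σ-algebra generated by `X₁,…,X_{ℓ−1}`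
    (𝔪 : ℕ → MeasurableSpace Ω)
    (h𝔪 : ∀ ℓ, 𝔪 ℓ = ⨆ i ∈ Finset.Icc 1 (ℓ - 1),
      MeasurableSpace.comap (X i) inferInstance)
    -- the conditional variances `σ²_ℓ = E[Y_ℓ² | X₁,…,X_{ℓ−1}]`
    (σsq : ℕ → Ω → ℝ)
    (hσsq : ∀ ℓ, σsq ℓ = P[fun ω => (Y ℓ ω) ^ 2 | 𝔪 ℓ]) :
    ∫ ω, (∑ ℓ ∈ Finset.Icc 2 n, σsq ℓ ω) ∂P = ((n : ℝ) - 1) / n :=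
  statement_10_general P p n hp hn θ hθ X hXmeas hXsph hXindep hXid hXrot Sg hSg u hu Eu2 hEu2
    hEu2pos Y hY 𝔪 h𝔪 σsq hσsq
end

section
/- Fourth moment identity: in the fixed-sample setup, for every 2 ≤ ℓ ≤ n, E[ ( Σ_{i=1}^{ℓ−1} u_i u_ℓ ⟨S_i,S_ℓ⟩ )⁴ ] = (3(ℓ−1)/(p²−1)) (E[u₁⁴])² + (3(ℓ−1)(ℓ−2)/(p−1)²) E[u₁⁴] (E[u₁²])². -/
open MeasureTheory ProbabilityTheory Filter
open scoped BigOperators RealInnerProductSpace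

/-!
Conditionally on `X_ℓ = z`, the summands `u_i u_ℓ ⟨S_i, S_ℓ⟩`, `i < ℓ`, are i.i.d. and centred,
so the fourth moment of their sum is `(ℓ-1) κ(z) + 3 (ℓ-1)(ℓ-2) σ²(z)²`, where `σ²(z)` and `κ(z)`
are the second and fourth moments of one summand. Both are computed from the rotational symmetry
about `θ`: reflections fixing `θ` kill odd moments of the coordinates `⟨S, v⟩` (`v ⊥ θ`) and make
`E[u^m ⟨S, v⟩^k]` depend only on `‖v‖`. Summing `⟨S, e_i⟩²` over an orthonormal basis of `θ^⊥`
gives `σ²(z) = u(z)² E[u²]/(p-1)`; comparing `⟨S, e_i + e_j⟩⁴` with `⟨S, √2 e_i⟩⁴` gives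
`E[u⁴⟨S,e_i⟩²⟨S,e_j⟩²] = E[u⁴⟨S,e_i⟩⁴]/3`, and then the same basis sum gives
`κ(z) = u(z)⁴ · 3 E[u⁴]/(p²-1)`.
-/

namespace ProbabilityTheory

variable {Ω : Type*} [MeasurableSpace Ω] {P : Measure Ω}

lemma _root_.MeasureTheory.MemLp.integrable_pow_of_le [IsFiniteMeasure P] {f : Ω → ℝ} {n k : ℕ}
    (hf : MemLp f n P) (hk : k ≤ n) : Integrable (fun ω => f ω ^ k) P :=
  (integrable_norm_iff (hf.1.pow k)).mp <| by
    simpa only [Pi.pow_apply, norm_pow] using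
      integrable_norm_pow_of_le hf.1 hk hf.integrable_norm_pow'

lemma IndepFun.integral_add_pow [IsFiniteMeasure P] {S Y : Ω → ℝ} {n : ℕ} (hSY : IndepFun S Y P)
    (hS : MemLp S n P) (hY : MemLp Y n P) :
    ∫ ω, (S ω + Y ω) ^ n ∂P =
      ∑ k ∈ Finset.range (n + 1), (∫ ω, S ω ^ k ∂P) * (∫ ω, Y ω ^ (n - k) ∂P) * n.choose k := by
  have hpow : ∀ k j, IndepFun (fun ω => S ω ^ k) (fun ω => Y ω ^ j) P := fun k j =>
    hSY.comp (measurable_id.pow_const k) (measurable_id.pow_const j)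
  simp_rw [add_pow]
  rw [integral_finsetSum]
  · refine Finset.sum_congr rfl fun k _ => ?_
    rw [integral_mul_const, (hpow k (n - k)).integral_fun_mul_eq_mul_integral
      (hS.1.pow k) (hY.1.pow (n - k))]
  · intro k hk
    have hkn : k ≤ n := Nat.lt_succ_iff.mp (Finset.mem_range.mp hk)
    exact ((hpow k (n - k)).integrable_mul (hS.integrable_pow_of_le hkn)
      (hY.integrable_pow_of_le (Nat.sub_le n k))).mul_const _

section IidSums

variable {ι : Type*} {Y : ι → Ω → ℝ} {s : Finset ι} {a : ι}

lemma iIndepFun.indepFun_sum_of_notMem (hY : iIndepFun Y P)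
    (hmeas : ∀ i, AEMeasurable (Y i) P) (ha : a ∉ s) :
    IndepFun (Y a) (fun ω => ∑ i ∈ s, Y i ω) P := by
  convert (hY.indepFun_finsetSum_of_notMem₀ hmeas ha).symm using 1
  exact (Finset.sum_fn s Y).symm

lemma iIndepFun.integral_sum_sq [IsProbabilityMeasure P] (hY : iIndepFun Y P)
    (hL : ∀ i, MemLp (Y i) 2 P) {σ2 : ℝ} (h1 : ∀ i ∈ s, ∫ ω, Y i ω ∂P = 0)
    (h2 : ∀ i ∈ s, ∫ ω, Y i ω ^ 2 ∂P = σ2) :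
    ∫ ω, (∑ i ∈ s, Y i ω) ^ 2 ∂P = s.card * σ2 := by
  classical
  induction s using Finset.induction_on with
  | empty => simp
  | insert a s ha ih =>
    simp only [Finset.mem_insert, forall_eq_or_imp] at h1 h2
    have hS1 : ∫ ω, ∑ i ∈ s, Y i ω ∂P = 0 := by
      rw [integral_finsetSum s fun i _ => (hL i).integrable one_le_two]
      exact Finset.sum_eq_zero h1.2
    simp only [Finset.sum_insert ha]
    rw [(hY.indepFun_sum_of_notMem (fun i => (hL i).1.aemeasurable) ha).integral_add_pow
      (hL a) (memLp_finsetSum s fun i _ => hL i)]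
    simp [Finset.sum_range_succ, h1.1, h2.1, hS1, ih h1.2 h2.2, Finset.card_insert_of_notMem ha]
    ring

lemma iIndepFun.integral_sum_pow_four [IsProbabilityMeasure P] (hY : iIndepFun Y P)
    (hL : ∀ i, MemLp (Y i) 4 P) {σ2 κ : ℝ} (h1 : ∀ i ∈ s, ∫ ω, Y i ω ∂P = 0)
    (h2 : ∀ i ∈ s, ∫ ω, Y i ω ^ 2 ∂P = σ2) (h4 : ∀ i ∈ s, ∫ ω, Y i ω ^ 4 ∂P = κ) :
    ∫ ω, (∑ i ∈ s, Y i ω) ^ 4 ∂P = s.card * κ + 3 * s.card * (s.card - 1) * σ2 ^ 2 := by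
  classical
  have hL2 : ∀ i, MemLp (Y i) 2 P := fun i => (hL i).mono_exponent (by norm_num)
  induction s using Finset.induction_on with
  | empty => simp
  | insert a s ha ih =>
    simp only [Finset.mem_insert, forall_eq_or_imp] at h1 h2 h4
    have hS1 : ∫ ω, ∑ i ∈ s, Y i ω ∂P = 0 := by
      rw [integral_finsetSum s fun i _ => (hL i).integrable (by norm_num)]
      exact Finset.sum_eq_zero h1.2
    simp only [Finset.sum_insert ha]
    rw [(hY.indepFun_sum_of_notMem (fun i => (hL i).1.aemeasurable) ha).integral_add_pow
      (hL a) (memLp_finsetSum s fun i _ => hL i)]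
    simp [Finset.sum_range_succ, h1.1, h2.1, h4.1, hS1, hY.integral_sum_sq hL2 h1.2 h2.2,
      ih h1.2 h2.2 h4.2, Finset.card_insert_of_notMem ha, Nat.choose]
    ring

end IidSums

lemma IndepFun.integral_comp_eq_integral_integral_s13 [IsFiniteMeasure P] {α β : Type*}
    [MeasurableSpace α] [MeasurableSpace β] {A : Ω → α} {Z : Ω → β} (hAZ : IndepFun A Z P)
    (hA : Measurable A) (hZ : Measurable Z) {H : α → β → ℝ}
    (hH : Measurable (Function.uncurry H)) (hint : Integrable (fun ω => H (A ω) (Z ω)) P) :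
    ∫ ω, H (A ω) (Z ω) ∂P = ∫ ω, ∫ ω', H (A ω') (Z ω) ∂P ∂P := by
  have hmap : P.map (fun ω => (A ω, Z ω)) = (P.map A).prod (P.map Z) :=
    (indepFun_iff_map_prod_eq_prod_map_map hA.aemeasurable hZ.aemeasurable).mp hAZ
  have hAZm : AEMeasurable (fun ω => (A ω, Z ω)) P := (hA.prodMk hZ).aemeasurable
  have hint' : Integrable (Function.uncurry H) ((P.map A).prod (P.map Z)) := by
    rw [← hmap, integrable_map_measure hH.aestronglyMeasurable hAZm]
    exact hint
  calc ∫ ω, H (A ω) (Z ω) ∂P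
      = ∫ q, Function.uncurry H q ∂(P.map A).prod (P.map Z) := by
        rw [← hmap, integral_map hAZm hH.aestronglyMeasurable]; rfl
    _ = ∫ z, ∫ a, H a z ∂P.map A ∂P.map Z := integral_prod_symm _ hint'
    _ = ∫ ω, ∫ ω', H (A ω') (Z ω) ∂P ∂P := by
        rw [integral_map hZ.aemeasurable
          (hH.stronglyMeasurable.integral_prod_left (μ := P.map A)).aestronglyMeasurable]
        refine integral_congr_ae (ae_of_all _ fun ω => ?_)
        exact integral_map hA.aemeasurable
          (hH.comp (measurable_id.prodMk measurable_const)).aestronglyMeasurable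

/-- Freezing `V k = z`, which is independent of `(V i)_{i ∈ s}`, leaves a sum of i.i.d. centred
terms. -/
theorem iIndepFun.integral_sum_comp_pow_four [IsProbabilityMeasure P] {ι α : Type*}
    [MeasurableSpace α] {V : ι → Ω → α} (hV : iIndepFun V P) (hVm : ∀ i, Measurable (V i))
    {μ : Measure α} (hlaw : ∀ i, P.map (V i) = μ) {G : α → α → ℝ}
    (hG : Measurable (Function.uncurry G)) {C : ℝ} (hGC : ∀ x z, |G x z| ≤ C)
    {σ2 κ : α → ℝ} (h1 : ∀ z, ∫ x, G x z ∂μ = 0) (h2 : ∀ z, ∫ x, G x z ^ 2 ∂μ = σ2 z)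
    (h4 : ∀ z, ∫ x, G x z ^ 4 ∂μ = κ z) {s : Finset ι} {k : ι} (hk : k ∉ s) :
    ∫ ω, (∑ i ∈ s, G (V i ω) (V k ω)) ^ 4 ∂P =
      ∫ ω, (s.card * κ (V k ω) + 3 * s.card * (s.card - 1) * σ2 (V k ω) ^ 2) ∂P := by
  have hGL : ∀ {f g : Ω → α}, Measurable f → Measurable g → MemLp (fun ω => G (f ω) (g ω)) 4 P :=
    fun hf hg => (memLp_top_of_bound (hG.comp (hf.prodMk hg)).aestronglyMeasurable C
      (ae_of_all _ fun ω => hGC _ _)).mono_exponent le_top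
  have hAZ : IndepFun (fun ω (i : s) => V i ω) (V k) P := by
    classical
    exact (hV.indepFun_finset s {k} (Finset.disjoint_singleton_right.mpr hk) hVm).comp
      measurable_id (measurable_pi_apply ⟨k, Finset.mem_singleton_self k⟩)
  have hH : Measurable (Function.uncurry fun (a : s → α) z => (∑ i : s, G (a i) z) ^ 4) :=
    (Finset.measurable_sum _ fun i _ =>
      hG.comp (((measurable_pi_apply i).comp measurable_fst).prodMk measurable_snd)).pow_const 4
  have hL : MemLp (fun ω => ∑ i : s, G (V i ω) (V k ω)) (4 : ℕ) P :=
    memLp_finsetSum _ fun i _ => hGL (hVm i) (hVm k)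
  have hinner : ∀ z, ∫ ω, (∑ i ∈ s, G (V i ω) z) ^ 4 ∂P =
      s.card * κ z + 3 * s.card * (s.card - 1) * σ2 z ^ 2 := fun z => by
    have hGz : Measurable fun x => G x z := hG.comp (measurable_id.prodMk measurable_const)
    have hmom : ∀ n i, ∫ ω, G (V i ω) z ^ n ∂P = ∫ x, G x z ^ n ∂μ := fun n i => by
      rw [← hlaw i]
      exact (integral_map (hVm i).aemeasurable (hGz.pow_const n).aestronglyMeasurable).symm
    refine (hV.comp (fun _ x => G x z) fun _ => hGz).integral_sum_pow_four
      (fun i => hGL (hVm i) measurable_const) (fun i _ => ?_) (fun i _ => ?_) (fun i _ => ?_)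
    · simpa using (hmom 1 i).trans (by simpa using h1 z)
    · exact (hmom 2 i).trans (h2 z)
    · exact (hmom 4 i).trans (h4 z)
  simp only [← Finset.sum_coe_sort s]
  rw [hAZ.integral_comp_eq_integral_integral_s13 (measurable_pi_lambda _ fun i => hVm i) (hVm k) hH
    (hL.integrable_pow_of_le le_rfl)]
  refine integral_congr_ae (ae_of_all _ fun ω => (Eq.trans ?_ (hinner (V k ω))))
  refine integral_congr_ae (ae_of_all _ fun ω' => ?_)
  simp only [Finset.sum_coe_sort s fun i => G (V i ω') (V k ω)]

end ProbabilityTheory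

lemma finrank_orthogonal_span_singleton_eq_sub_one {E : Type*} [NormedAddCommGroup E]
    [InnerProductSpace ℝ E] [FiniteDimensional ℝ E] {θ : E} (hθ : θ ≠ 0) :
    (Module.finrank ℝ (ℝ ∙ θ)ᗮ : ℝ) = Module.finrank ℝ E - 1 := by
  have h := Submodule.finrank_add_finrank_orthogonal (ℝ ∙ θ)
  rw [finrank_span_singleton hθ] at h
  rw [← h]
  push_cast
  ring

section Sphere

variable {E : Type*} [NormedAddCommGroup E] [InnerProductSpace ℝ E]

/-- The paper's `u(x)`: for `‖x‖ = 1` it is the norm of the component of `x` orthogonal to `θ`. -/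
noncomputable def tangentNorm (θ x : E) : ℝ := √(1 - ⟪x, θ⟫ ^ 2)

lemma tangentNorm_nonneg (θ x : E) : 0 ≤ tangentNorm θ x := Real.sqrt_nonneg _

lemma tangentNorm_le_one (θ x : E) : tangentNorm θ x ≤ 1 :=
  Real.sqrt_le_one.mpr (by nlinarith [sq_nonneg ⟪x, θ⟫])

lemma tangentNorm_map {θ : E} {O : E ≃ₗᵢ[ℝ] E} (hO : O θ = θ) (x : E) :
    tangentNorm θ (O x) = tangentNorm θ x := by
  unfold tangentNorm
  conv_lhs => rw [← hO, O.inner_map_map]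

variable [MeasurableSpace E]

/-- The paper's sign `S`, taking an arbitrary unit value orthogonal to `θ` at `x = ±θ`. -/
structure IsSignMap (θ : E) (Sg : E → E) : Prop where
  measurable : Measurable Sg
  eq_of_ne : ∀ x, x - ⟪x, θ⟫ • θ ≠ 0 → Sg x = ‖x - ⟪x, θ⟫ • θ‖⁻¹ • (x - ⟪x, θ⟫ • θ)
  norm_eq_one : ∀ x, ‖Sg x‖ = 1
  inner_eq_zero : ∀ x, ⟪Sg x, θ⟫ = 0

structure IsRotSymOnSphere (θ : E) (μ : Measure E) : Prop where
  map_eq : ∀ O : E ≃ₗᵢ[ℝ] E, O θ = θ → μ.map O = μ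
  ae_norm_eq_one : ∀ᵐ x ∂μ, ‖x‖ = 1

variable {θ : E} {Sg : E → E}

lemma IsSignMap.map_apply (hS : IsSignMap θ Sg) (hθ : ‖θ‖ = 1) {O : E ≃ₗᵢ[ℝ] E} (hO : O θ = θ)
    {x : E} (hx : ‖x‖ = 1) (hux : tangentNorm θ x ≠ 0) : Sg (O x) = O (Sg x) := by
  have hproj : O x - ⟪O x, θ⟫ • θ = O (x - ⟪x, θ⟫ • θ) := by
    conv_lhs => rw [← hO, O.inner_map_map, hO]
    rw [map_sub, map_smul, hO]
  have hne : x - ⟪x, θ⟫ • θ ≠ 0 := by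
    intro h
    have hnorm := congrArg norm (sub_eq_zero.mp h)
    rw [norm_smul, hθ, mul_one, hx, Real.norm_eq_abs] at hnorm
    exact hux (Real.sqrt_eq_zero'.mpr (by nlinarith [sq_abs ⟪x, θ⟫]))
  rw [hS.eq_of_ne _ (hproj ▸ O.map_ne_zero_iff.mpr hne), hS.eq_of_ne _ hne, hproj, O.norm_map,
    map_smul]

lemma IsSignMap.abs_inner_le (hS : IsSignMap θ Sg) (x v : E) : |⟪Sg x, v⟫| ≤ ‖v‖ :=
  (abs_real_inner_le_norm _ _).trans_eq (by rw [hS.norm_eq_one, one_mul])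

lemma IsSignMap.sum_inner_sq (hS : IsSignMap θ Sg) {ι : Type*} [Fintype ι]
    (b : OrthonormalBasis ι ℝ (ℝ ∙ θ)ᗮ) (x : E) : ∑ i, ⟪Sg x, b i⟫ ^ 2 = 1 := by
  have hmem : Sg x ∈ (ℝ ∙ θ)ᗮ :=
    Submodule.mem_orthogonal_singleton_iff_inner_left.mpr (hS.inner_eq_zero x)
  simpa [hS.norm_eq_one] using b.sum_sq_inner_left ⟨Sg x, hmem⟩

variable [BorelSpace E] {μ : Measure E}

@[fun_prop]
lemma measurable_tangentNorm (θ : E) : Measurable (tangentNorm θ) := by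
  unfold tangentNorm; fun_prop

lemma IsSignMap.integrable_pow_mul_inner_pow [IsFiniteMeasure μ] (hS : IsSignMap θ Sg)
    (v w : E) (m k j : ℕ) :
    Integrable (fun x => tangentNorm θ x ^ m * (⟪Sg x, v⟫ ^ k * ⟪Sg x, w⟫ ^ j)) μ := by
  have := hS.measurable
  refine Integrable.of_bound (by fun_prop : Measurable _).aestronglyMeasurable
    (‖v‖ ^ k * ‖w‖ ^ j) (ae_of_all _ fun x => ?_)
  have hu : tangentNorm θ x ^ m ≤ 1 :=
    pow_le_one₀ (tangentNorm_nonneg θ x) (tangentNorm_le_one θ x)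
  calc _ = tangentNorm θ x ^ m * (|⟪Sg x, v⟫| ^ k * |⟪Sg x, w⟫| ^ j) := by
        simp only [norm_mul, norm_pow, Real.norm_eq_abs, abs_of_nonneg (tangentNorm_nonneg θ x)]
    _ ≤ 1 * (‖v‖ ^ k * ‖w‖ ^ j) := by
        gcongr
        exacts [hS.abs_inner_le x v, hS.abs_inner_le x w]
    _ = _ := one_mul _

/-- `Sg ∘ O = O ∘ Sg` can only fail at `±θ`, where the factor `tangentNorm θ ^ m` vanishes. -/
lemma integral_tangentNorm_pow_mul_comp_map_sign
    (hμ : IsRotSymOnSphere θ μ) (hθ : ‖θ‖ = 1)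
    (hS : IsSignMap θ Sg) {O : E ≃ₗᵢ[ℝ] E} (hO : O θ = θ) {m : ℕ} (hm : m ≠ 0) {φ : E → ℝ}
    (hφ : Measurable φ) :
    ∫ x, tangentNorm θ x ^ m * φ (O (Sg x)) ∂μ = ∫ x, tangentNorm θ x ^ m * φ (Sg x) ∂μ := by
  have := hS.measurable
  conv_rhs => rw [← hμ.map_eq O hO]
  rw [integral_map O.continuous.measurable.aemeasurable
    (by fun_prop : Measurable _).aestronglyMeasurable]
  refine integral_congr_ae (hμ.ae_norm_eq_one.mono fun x hx => ?_)
  simp only [tangentNorm_map hO]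
  by_cases hux : tangentNorm θ x = 0
  · simp [hux, hm]
  · rw [hS.map_apply hθ hO hx hux]

lemma integral_tangentNorm_pow_mul_inner_pow_eq_zero_of_odd
    (hμ : IsRotSymOnSphere θ μ) (hθ : ‖θ‖ = 1)
    (hS : IsSignMap θ Sg) {v w : E} (hwθ : ⟪w, θ⟫ = 0) (hwv : ⟪w, v⟫ = 0) {m : ℕ} (hm : m ≠ 0)
    (k : ℕ) {j : ℕ} (hj : Odd j) :
    ∫ x, tangentNorm θ x ^ m * (⟪Sg x, v⟫ ^ k * ⟪Sg x, w⟫ ^ j) ∂μ = 0 := by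
  let O := (ℝ ∙ w)ᗮ.reflection
  have hfix : ∀ {a}, ⟪w, a⟫ = 0 → O a = a := fun ha =>
    Submodule.reflection_mem_subspace_eq_self
      (Submodule.mem_orthogonal_singleton_iff_inner_right.mpr ha)
  have hv : ∀ s, ⟪O s, v⟫ = ⟪s, v⟫ := fun s => by
    conv_lhs => rw [← hfix hwv, O.inner_map_map]
  have hw : ∀ s, ⟪O s, w⟫ = -⟪s, w⟫ := fun s => by
    calc ⟪O s, w⟫ = ⟪O s, O (-w)⟫ := by
          rw [map_neg, Submodule.reflection_orthogonalComplement_singleton_eq_neg, neg_neg]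
      _ = -⟪s, w⟫ := by rw [O.inner_map_map, inner_neg_right]
  have h := integral_tangentNorm_pow_mul_comp_map_sign hμ hθ hS (hfix hwθ) hm
    (φ := fun s => ⟪s, v⟫ ^ k * ⟪s, w⟫ ^ j) (by fun_prop)
  simp only [hv, hw, hj.neg_pow, mul_neg, integral_neg] at h
  linarith

lemma integral_tangentNorm_pow_mul_inner_pow_eq_of_norm_eq
    (hμ : IsRotSymOnSphere θ μ) (hθ : ‖θ‖ = 1)
    (hS : IsSignMap θ Sg) {v w : E} (hvθ : ⟪v, θ⟫ = 0) (hwθ : ⟪w, θ⟫ = 0) (hvw : ‖v‖ = ‖w‖)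
    {m : ℕ} (hm : m ≠ 0) (k : ℕ) :
    ∫ x, tangentNorm θ x ^ m * ⟪Sg x, v⟫ ^ k ∂μ = ∫ x, tangentNorm θ x ^ m * ⟪Sg x, w⟫ ^ k ∂μ := by
  let O := (ℝ ∙ (v - w))ᗮ.reflection
  have hOθ : O θ = θ := Submodule.reflection_mem_subspace_eq_self
    (Submodule.mem_orthogonal_singleton_iff_inner_right.mpr
      (by rw [inner_sub_left, hvθ, hwθ, sub_zero]))
  have h := integral_tangentNorm_pow_mul_comp_map_sign hμ hθ hS hOθ hm
    (φ := fun s => ⟪s, w⟫ ^ k) (by fun_prop)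
  have hOw : ∀ s, ⟪O s, w⟫ = ⟪s, v⟫ := fun s => by
    rw [← O.inner_map_map s v, Submodule.reflection_sub hvw]
  simpa only [hOw] using h

lemma integral_tangentNorm_pow_mul_inner_sq [FiniteDimensional ℝ E] [IsFiniteMeasure μ]
    (hμ : IsRotSymOnSphere θ μ) (hθ : ‖θ‖ = 1)
    (hS : IsSignMap θ Sg) {v : E} (hv : ‖v‖ = 1) (hvθ : ⟪v, θ⟫ = 0) {m : ℕ} (hm : m ≠ 0) :
    Module.finrank ℝ (ℝ ∙ θ)ᗮ * ∫ x, tangentNorm θ x ^ m * ⟪Sg x, v⟫ ^ 2 ∂μ =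
      ∫ x, tangentNorm θ x ^ m ∂μ := by
  let b := stdOrthonormalBasis ℝ (ℝ ∙ θ)ᗮ
  have hterm : ∀ i, ∫ x, tangentNorm θ x ^ m * ⟪Sg x, b i⟫ ^ 2 ∂μ =
      ∫ x, tangentNorm θ x ^ m * ⟪Sg x, v⟫ ^ 2 ∂μ := fun i =>
    integral_tangentNorm_pow_mul_inner_pow_eq_of_norm_eq hμ hθ hS
      (Submodule.mem_orthogonal_singleton_iff_inner_left.mp (b i).2) hvθ
      ((b.orthonormal.1 i).trans hv.symm) hm 2
  have hsum : ∑ i, ∫ x, tangentNorm θ x ^ m * ⟪Sg x, b i⟫ ^ 2 ∂μ =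
      ∫ x, tangentNorm θ x ^ m ∂μ := by
    rw [← integral_finsetSum _ fun i _ => by
      simpa using hS.integrable_pow_mul_inner_pow (μ := μ) (b i) 0 m 2 0]
    simp only [← Finset.mul_sum, hS.sum_inner_sq b, mul_one]
  simpa [hterm] using hsum

lemma integral_tangentNorm_pow_mul_inner_sq_mul_inner_sq [IsFiniteMeasure μ]
    (hμ : IsRotSymOnSphere θ μ) (hθ : ‖θ‖ = 1)
    (hS : IsSignMap θ Sg) {e f : E} (he : ‖e‖ = 1) (hf : ‖f‖ = 1) (hef : ⟪e, f⟫ = 0)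
    (heθ : ⟪e, θ⟫ = 0) (hfθ : ⟪f, θ⟫ = 0) {m : ℕ} (hm : m ≠ 0) :
    3 * ∫ x, tangentNorm θ x ^ m * (⟪Sg x, e⟫ ^ 2 * ⟪Sg x, f⟫ ^ 2) ∂μ =
      ∫ x, tangentNorm θ x ^ m * ⟪Sg x, e⟫ ^ 4 ∂μ := by
  have hsum_norm : ‖e + f‖ = ‖√2 • e‖ := by
    rw [norm_smul, he, mul_one, Real.norm_of_nonneg (Real.sqrt_nonneg 2),
      ← Real.sqrt_sq (norm_nonneg _), norm_add_sq_real, he, hf, hef]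
    norm_num
  have hfour : ∫ x, tangentNorm θ x ^ m * ⟪Sg x, e + f⟫ ^ 4 ∂μ =
      4 * ∫ x, tangentNorm θ x ^ m * ⟪Sg x, e⟫ ^ 4 ∂μ := by
    rw [integral_tangentNorm_pow_mul_inner_pow_eq_of_norm_eq hμ hθ hS
      (by rw [inner_add_left, heθ, hfθ, add_zero]) (by rw [real_inner_smul_left, heθ, mul_zero])
      hsum_norm hm 4, ← integral_const_mul]
    congr 1 with x
    rw [real_inner_smul_right, mul_pow, show √2 ^ 4 = (4 : ℝ) by
      rw [show (4 : ℕ) = 2 * 2 from rfl, pow_mul, Real.sq_sqrt zero_le_two]; norm_num]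
    ring
  have hexpand : ∫ x, tangentNorm θ x ^ m * ⟪Sg x, e + f⟫ ^ 4 ∂μ =
      ∑ k ∈ Finset.range 5, (Nat.choose 4 k : ℝ) *
        ∫ x, tangentNorm θ x ^ m * (⟪Sg x, e⟫ ^ k * ⟪Sg x, f⟫ ^ (4 - k)) ∂μ := by
    simp_rw [← integral_const_mul]
    rw [← integral_finsetSum _ fun k _ => (hS.integrable_pow_mul_inner_pow e f m k _).const_mul _]
    congr 1 with x
    rw [inner_add_right, add_pow, Finset.mul_sum]
    exact Finset.sum_congr rfl fun k _ => by ring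
  have hodd : ∀ {j}, Odd j → ∀ k,
      ∫ x, tangentNorm θ x ^ m * (⟪Sg x, e⟫ ^ k * ⟪Sg x, f⟫ ^ j) ∂μ = 0 := fun hj k =>
    integral_tangentNorm_pow_mul_inner_pow_eq_zero_of_odd hμ hθ hS hfθ
      (by rw [real_inner_comm, hef]) hm k hj
  have hodd1 : ∫ x, tangentNorm θ x ^ m * (⟪Sg x, e⟫ * ⟪Sg x, f⟫ ^ 3) ∂μ = 0 := by
    simpa using hodd (j := 3) ⟨1, rfl⟩ 1
  have hodd3 : ∫ x, tangentNorm θ x ^ m * (⟪Sg x, e⟫ ^ 3 * ⟪Sg x, f⟫) ∂μ = 0 := by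
    simpa using hodd odd_one 3
  have hswap := integral_tangentNorm_pow_mul_inner_pow_eq_of_norm_eq hμ hθ hS hfθ heθ
    (hf.trans he.symm) hm 4
  rw [hexpand] at hfour
  simp [Finset.sum_range_succ, hodd1, hodd3, hswap, Nat.choose] at hfour
  linarith

lemma integral_tangentNorm_pow_mul_inner_pow_four [FiniteDimensional ℝ E] [IsFiniteMeasure μ]
    (hμ : IsRotSymOnSphere θ μ) (hθ : ‖θ‖ = 1)
    (hS : IsSignMap θ Sg) {v : E} (hv : ‖v‖ = 1) (hvθ : ⟪v, θ⟫ = 0) {m : ℕ} (hm : m ≠ 0) :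
    Module.finrank ℝ (ℝ ∙ θ)ᗮ * (Module.finrank ℝ (ℝ ∙ θ)ᗮ + 2) *
        ∫ x, tangentNorm θ x ^ m * ⟪Sg x, v⟫ ^ 4 ∂μ =
      3 * ∫ x, tangentNorm θ x ^ m ∂μ := by
  let b := stdOrthonormalBasis ℝ (ℝ ∙ θ)ᗮ
  set c := ∫ x, tangentNorm θ x ^ m * ⟪Sg x, v⟫ ^ 4 ∂μ
  have hbθ : ∀ i, ⟪(b i : E), θ⟫ = 0 := fun i =>
    Submodule.mem_orthogonal_singleton_iff_inner_left.mp (b i).2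
  have hdiag : ∀ i, ∫ x, tangentNorm θ x ^ m * ⟪Sg x, b i⟫ ^ 4 ∂μ = c := fun i =>
    integral_tangentNorm_pow_mul_inner_pow_eq_of_norm_eq hμ hθ hS (hbθ i) hvθ
      ((b.orthonormal.1 i).trans hv.symm) hm 4
  have hterm : ∀ i j, ∫ x, tangentNorm θ x ^ m * (⟪Sg x, b i⟫ ^ 2 * ⟪Sg x, b j⟫ ^ 2) ∂μ =
      c / 3 + if i = j then 2 * c / 3 else 0 := by
    intro i j
    split_ifs with hij
    · subst hij
      simp only [← pow_add, Nat.reduceAdd, hdiag]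
      ring
    · have hbij : ⟪(b i : E), (b j : E)⟫ = 0 := b.orthonormal.2 hij
      have h := integral_tangentNorm_pow_mul_inner_sq_mul_inner_sq hμ hθ hS
        (e := (b i : E)) (f := (b j : E)) (b.orthonormal.1 i) (b.orthonormal.1 j) hbij (hbθ i)
        (hbθ j) hm
      rw [hdiag] at h
      linarith
  have hint : ∀ i j, Integrable
      (fun x => tangentNorm θ x ^ m * (⟪Sg x, b i⟫ ^ 2 * ⟪Sg x, b j⟫ ^ 2)) μ := fun i j =>
    hS.integrable_pow_mul_inner_pow _ _ m 2 2
  have hsum : ∑ i, ∑ j, ∫ x, tangentNorm θ x ^ m * (⟪Sg x, b i⟫ ^ 2 * ⟪Sg x, b j⟫ ^ 2) ∂μ =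
      ∫ x, tangentNorm θ x ^ m ∂μ := by
    simp_rw [← integral_finsetSum _ fun j _ => hint _ j]
    rw [← integral_finsetSum _ fun i _ => integrable_finsetSum _ fun j _ => hint i j]
    congr 1 with x
    simp only [← Finset.mul_sum, hS.sum_inner_sq b, mul_one]
  simp only [hterm, Finset.sum_add_distrib, Finset.sum_const, Finset.sum_ite_eq,
    Finset.mem_univ, if_true, Finset.card_univ, Fintype.card_fin, nsmul_eq_mul] at hsum
  linear_combination 3 * hsum

end Sphere

section SignKernel

variable {E : Type*} [NormedAddCommGroup E] [InnerProductSpace ℝ E]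

/-- The summand `u_i u_ℓ ⟨S_i, S_ℓ⟩` is `signKernel θ S X_i X_ℓ`. -/
noncomputable def signKernel (θ : E) (Sg : E → E) (x z : E) : ℝ :=
  tangentNorm θ x * tangentNorm θ z * ⟪Sg x, Sg z⟫

lemma signKernel_pow (θ : E) (Sg : E → E) (x z : E) (n : ℕ) :
    signKernel θ Sg x z ^ n =
      tangentNorm θ z ^ n * (tangentNorm θ x ^ n * ⟪Sg x, Sg z⟫ ^ n) := by
  rw [signKernel]; ring

variable [MeasurableSpace E] {θ : E} {Sg : E → E}

lemma IsSignMap.abs_signKernel_le_one (hS : IsSignMap θ Sg) (x z : E) :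
    |signKernel θ Sg x z| ≤ 1 := by
  rw [signKernel, abs_mul, abs_mul, abs_of_nonneg (tangentNorm_nonneg θ x),
    abs_of_nonneg (tangentNorm_nonneg θ z)]
  exact mul_le_one₀ (mul_le_one₀ (tangentNorm_le_one θ x) (tangentNorm_nonneg θ z)
    (tangentNorm_le_one θ z)) (abs_nonneg _)
    ((hS.abs_inner_le x (Sg z)).trans_eq (hS.norm_eq_one z))

lemma IsSignMap.one_lt_finrank [FiniteDimensional ℝ E] (hS : IsSignMap θ Sg) (hθ : θ ≠ 0) :
    (1 : ℝ) < Module.finrank ℝ E := by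
  have hpos : 0 < Module.finrank ℝ (ℝ ∙ θ)ᗮ := Module.finrank_pos_iff_exists_ne_zero.mpr
    ⟨⟨Sg 0, Submodule.mem_orthogonal_singleton_iff_inner_left.mpr (hS.inner_eq_zero 0)⟩,
      (Submodule.mk_eq_zero _ _).not.mpr (norm_ne_zero_iff.mp (by simp [hS.norm_eq_one]))⟩
  have h := finrank_orthogonal_span_singleton_eq_sub_one hθ
  have : (1 : ℝ) ≤ Module.finrank ℝ (ℝ ∙ θ)ᗮ := by exact_mod_cast hpos
  linarith

variable [BorelSpace E] {μ : Measure E}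

lemma integral_signKernel [IsFiniteMeasure μ] (hμ : IsRotSymOnSphere θ μ) (hθ : ‖θ‖ = 1)
    (hS : IsSignMap θ Sg) (z : E) : ∫ x, signKernel θ Sg x z ∂μ = 0 := by
  have h := integral_tangentNorm_pow_mul_inner_pow_eq_zero_of_odd hμ hθ hS
    (v := 0) (hS.inner_eq_zero z) (inner_zero_right _) one_ne_zero 0 odd_one
  simp only [pow_one, pow_zero, one_mul] at h
  calc ∫ x, signKernel θ Sg x z ∂μ
      = tangentNorm θ z * ∫ x, tangentNorm θ x * ⟪Sg x, Sg z⟫ ∂μ := by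
        rw [← integral_const_mul]; congr 1 with x; rw [signKernel]; ring
    _ = 0 := by rw [h, mul_zero]

variable [FiniteDimensional ℝ E]

lemma IsSignMap.measurable_signKernel (hS : IsSignMap θ Sg) :
    Measurable (Function.uncurry (signKernel θ Sg)) := by
  have := hS.measurable
  change Measurable fun q : E × E => tangentNorm θ q.1 * tangentNorm θ q.2 * ⟪Sg q.1, Sg q.2⟫
  fun_prop

lemma integral_signKernel_sq [IsFiniteMeasure μ] (hμ : IsRotSymOnSphere θ μ) (hθ : ‖θ‖ = 1)
    (hS : IsSignMap θ Sg) (z : E) :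
    ∫ x, signKernel θ Sg x z ^ 2 ∂μ =
      tangentNorm θ z ^ 2 * ((∫ x, tangentNorm θ x ^ 2 ∂μ) / (Module.finrank ℝ E - 1)) := by
  have hθ0 : θ ≠ 0 := norm_ne_zero_iff.mp (by rw [hθ]; exact one_ne_zero)
  have h := integral_tangentNorm_pow_mul_inner_sq hμ hθ hS (hS.norm_eq_one z)
    (hS.inner_eq_zero z) two_ne_zero
  rw [finrank_orthogonal_span_singleton_eq_sub_one hθ0] at h
  simp_rw [signKernel_pow, integral_const_mul]
  congr 1
  rw [eq_div_iff (by linarith [hS.one_lt_finrank hθ0]), mul_comm, h]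

lemma integral_signKernel_pow_four [IsFiniteMeasure μ] (hμ : IsRotSymOnSphere θ μ)
    (hθ : ‖θ‖ = 1) (hS : IsSignMap θ Sg) (z : E) :
    ∫ x, signKernel θ Sg x z ^ 4 ∂μ = tangentNorm θ z ^ 4 *
      (3 * (∫ x, tangentNorm θ x ^ 4 ∂μ) /
        ((Module.finrank ℝ E - 1) * (Module.finrank ℝ E + 1))) := by
  have hθ0 : θ ≠ 0 := norm_ne_zero_iff.mp (by rw [hθ]; exact one_ne_zero)
  have h := integral_tangentNorm_pow_mul_inner_pow_four hμ hθ hS (hS.norm_eq_one z)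
    (hS.inner_eq_zero z) four_ne_zero
  rw [finrank_orthogonal_span_singleton_eq_sub_one hθ0] at h
  have hN := hS.one_lt_finrank hθ0
  simp_rw [signKernel_pow, integral_const_mul]
  congr 1
  rw [eq_div_iff (by nlinarith)]
  linear_combination h

theorem ProbabilityTheory.iIndepFun.integral_sum_signKernel_pow_four {Ω ι : Type*}
    [MeasurableSpace Ω] {P : Measure Ω} [IsProbabilityMeasure P] {V : ι → Ω → E}
    (hV : iIndepFun V P) (hVm : ∀ i, Measurable (V i)) (hlaw : ∀ i, P.map (V i) = μ)
    (hμ : IsRotSymOnSphere θ μ) (hθ : ‖θ‖ = 1) (hS : IsSignMap θ Sg) {s : Finset ι} {k : ι}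
    (hk : k ∉ s) :
    ∫ ω, (∑ i ∈ s, signKernel θ Sg (V i ω) (V k ω)) ^ 4 ∂P =
      (s.card * (3 * (∫ x, tangentNorm θ x ^ 4 ∂μ) /
          ((Module.finrank ℝ E - 1) * (Module.finrank ℝ E + 1))) +
        3 * s.card * (s.card - 1) *
          ((∫ x, tangentNorm θ x ^ 2 ∂μ) / (Module.finrank ℝ E - 1)) ^ 2) *
        ∫ x, tangentNorm θ x ^ 4 ∂μ := by
  have : IsProbabilityMeasure μ :=
    hlaw k ▸ Measure.isProbabilityMeasure_map (hVm k).aemeasurable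
  have hM4 : ∫ ω, tangentNorm θ (V k ω) ^ 4 ∂P = ∫ x, tangentNorm θ x ^ 4 ∂μ := by
    rw [← hlaw k, integral_map (hVm k).aemeasurable (by fun_prop)]
  rw [hV.integral_sum_comp_pow_four hVm hlaw hS.measurable_signKernel hS.abs_signKernel_le_one
    (integral_signKernel hμ hθ hS) (integral_signKernel_sq hμ hθ hS)
    (integral_signKernel_pow_four hμ hθ hS) hk]
  generalize 3 * (∫ x, tangentNorm θ x ^ 4 ∂μ) /
    ((Module.finrank ℝ E - 1) * (Module.finrank ℝ E + 1)) = A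
  generalize (∫ x, tangentNorm θ x ^ 2 ∂μ) / (Module.finrank ℝ E - 1) = B
  rw [← hM4, ← integral_const_mul]
  exact integral_congr_ae (ae_of_all _ fun ω => by ring)

end SignKernel

lemma Fin.sum_Iio_eq_sum_Icc {M : Type*} [AddCommMonoid M] {n : ℕ} (k : Fin n) (f : ℕ → M) :
    ∑ j ∈ Finset.Iio k, f (j + 1) = ∑ i ∈ Finset.Icc 1 (k : ℕ), f i :=
  calc ∑ j ∈ Finset.Iio k, f (j + 1)
      = ∑ j ∈ (Finset.Iio k).map Fin.valEmbedding, f (j + 1) :=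
        (Finset.sum_map (Finset.Iio k) Fin.valEmbedding fun j => f (j + 1)).symm
    _ = _ := by
      rw [Fin.map_valEmbedding_Iio, Nat.Iio_eq_range, Finset.range_eq_Ico, Finset.sum_Ico_add',
        Finset.Ico_add_one_right_eq_Icc, zero_add]

theorem statement_13_general
    {Ω : Type*} [MeasurableSpace Ω] (P : Measure Ω) [IsProbabilityMeasure P]
    (p n : ℕ) (hp : 2 ≤ p)
    (θ : EuclideanSpace ℝ (Fin p)) (hθ : ‖θ‖ = 1)
    -- the observations `X i`, `1 ≤ i ≤ n`
    (X : ℕ → Ω → EuclideanSpace ℝ (Fin p))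
    (hXmeas : ∀ i, 1 ≤ i → i ≤ n → Measurable (X i))
    (hXsph : ∀ i, 1 ≤ i → i ≤ n → ∀ ω, ‖X i ω‖ = 1)
    -- i.i.d. observations with common rotationally symmetric distribution about `θ`
    (hXindep : iIndepFun
      (fun i : Fin n => X ((i : ℕ) + 1)) P)
    (hXid : ∀ i, 1 ≤ i → i ≤ n → Measure.map (X i) P = Measure.map (X 1) P)
    (hXrot : RotSym θ (Measure.map (X 1) P))
    -- the sign map `Sg`: a fixed measurable choice, equal to the normalized projection of `x`
    -- on the orthogonal complement of `θ` whenever `x ≠ ±θ`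
    (Sg : EuclideanSpace ℝ (Fin p) → EuclideanSpace ℝ (Fin p))
    (hSgmeas : Measurable Sg)
    (hSg : ∀ x, x - ⟪x, θ⟫ • θ ≠ 0 →
      Sg x = ‖x - ⟪x, θ⟫ • θ‖⁻¹ • (x - ⟪x, θ⟫ • θ))
    (hSgunit : ∀ x, ‖Sg x‖ = 1)
    (hSgperp : ∀ x, ⟪Sg x, θ⟫ = 0)
    -- `u i ω = u(X_i(ω))`
    (u : ℕ → Ω → ℝ)
    (hu : ∀ i ω, u i ω = Real.sqrt (1 - ⟪X i ω, θ⟫ ^ 2))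
    -- the moments `E[u₁²]` and `E[u₁⁴]`
    (Eu2 Eu4 : ℝ)
    (hEu2 : Eu2 = ∫ ω, (u 1 ω) ^ 2 ∂P)
    (hEu4 : Eu4 = ∫ ω, (u 1 ω) ^ 4 ∂P)
    (ℓ : ℕ) (hℓ : 2 ≤ ℓ) (hℓn : ℓ ≤ n) :
    ∫ ω, (∑ i ∈ Finset.Icc 1 (ℓ - 1),
        u i ω * u ℓ ω * ⟪Sg (X i ω), Sg (X ℓ ω)⟫) ^ 4 ∂P =
      3 * ((ℓ : ℝ) - 1) / ((p : ℝ) ^ 2 - 1) * Eu4 ^ 2 +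
      3 * ((ℓ : ℝ) - 1) * ((ℓ : ℝ) - 2) / ((p : ℝ) - 1) ^ 2 * Eu4 * Eu2 ^ 2 := by
  obtain ⟨k, rfl⟩ : ∃ k : Fin n, (k : ℕ) + 1 = ℓ := ⟨⟨ℓ - 1, by omega⟩, by simp only; omega⟩
  have hX1 : Measurable (X 1) := hXmeas 1 le_rfl (by omega)
  have hμ : IsRotSymOnSphere θ (P.map (X 1)) := ⟨hXrot, (ae_map_iff hX1.aemeasurable
    (measurableSet_eq_fun measurable_norm measurable_const)).mpr
      (ae_of_all _ (hXsph 1 le_rfl (by omega)))⟩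
  have hmoment : ∀ j, ∫ x, tangentNorm θ x ^ j ∂P.map (X 1) = ∫ ω, u 1 ω ^ j ∂P := fun j => by
    rw [integral_map hX1.aemeasurable (by fun_prop)]
    simp only [hu, tangentNorm]
  have hrow := hXindep.integral_sum_signKernel_pow_four
    (fun i => hXmeas _ (by omega) (by omega)) (fun i => hXid _ (by omega) (by omega)) hμ hθ
    ⟨hSgmeas, hSg, hSgunit, hSgperp⟩ (Finset.notMem_Iio_self (b := k))
  simp only [Nat.add_sub_cancel, ← Fin.sum_Iio_eq_sum_Icc k, hu]
  convert hrow using 1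
  · rfl
  rw [Fin.card_Iio, hmoment, hmoment, ← hEu2, ← hEu4, finrank_euclideanSpace_fin]
  have hp1 : (p : ℝ) - 1 ≠ 0 := by
    have : (2 : ℝ) ≤ p := by exact_mod_cast hp
    linarith
  have hp2 : (p : ℝ) + 1 ≠ 0 := by positivity
  rw [show (p : ℝ) ^ 2 - 1 = (p - 1) * (p + 1) by ring]
  push_cast
  field_simp
  ring

/-- Fourth moment identity: in the fixed-sample setup, for `2 ≤ ℓ ≤ n`,
`E[(Σ_{i=1}^{ℓ−1} uᵢu_ℓ⟨Sᵢ,S_ℓ⟩)⁴] = (3(ℓ−1)/(p²−1))(E[u₁⁴])²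
  + (3(ℓ−1)(ℓ−2)/(p−1)²)E[u₁⁴](E[u₁²])²`. -/
theorem statement_13
    {Ω : Type*} [MeasurableSpace Ω] (P : Measure Ω) [IsProbabilityMeasure P]
    (p n : ℕ) (hp : 2 ≤ p) (hn : 2 ≤ n)
    (θ : EuclideanSpace ℝ (Fin p)) (hθ : ‖θ‖ = 1)
    -- the observations `X i`, `1 ≤ i ≤ n`
    (X : ℕ → Ω → EuclideanSpace ℝ (Fin p))
    (hXmeas : ∀ i, 1 ≤ i → i ≤ n → Measurable (X i))
    (hXsph : ∀ i, 1 ≤ i → i ≤ n → ∀ ω, ‖X i ω‖ = 1)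
    -- i.i.d. observations with common rotationally symmetric distribution about `θ`
    (hXindep : iIndepFun
      (fun i : Fin n => X ((i : ℕ) + 1)) P)
    (hXid : ∀ i, 1 ≤ i → i ≤ n → Measure.map (X i) P = Measure.map (X 1) P)
    (hXrot : RotSym θ (Measure.map (X 1) P))
    -- the sign map `Sg`: a fixed measurable choice, equal to the normalized projection of `x`
    -- on the orthogonal complement of `θ` whenever `x ≠ ±θ`
    (Sg : EuclideanSpace ℝ (Fin p) → EuclideanSpace ℝ (Fin p))
    (hSgmeas : Measurable Sg)
    (hSg : ∀ x, x - ⟪x, θ⟫ • θ ≠ 0 →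
      Sg x = ‖x - ⟪x, θ⟫ • θ‖⁻¹ • (x - ⟪x, θ⟫ • θ))
    (hSgunit : ∀ x, ‖Sg x‖ = 1)
    (hSgperp : ∀ x, ⟪Sg x, θ⟫ = 0)
    -- `u i ω = u(X_i(ω))`
    (u : ℕ → Ω → ℝ)
    (hu : ∀ i ω, u i ω = Real.sqrt (1 - ⟪X i ω, θ⟫ ^ 2))
    -- the moments `E[u₁²]` and `E[u₁⁴]`
    (Eu2 Eu4 : ℝ)
    (hEu2 : Eu2 = ∫ ω, (u 1 ω) ^ 2 ∂P)
    (hEu4 : Eu4 = ∫ ω, (u 1 ω) ^ 4 ∂P)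
    (hEu2pos : 0 < Eu2)
    (ℓ : ℕ) (hℓ : 2 ≤ ℓ) (hℓn : ℓ ≤ n) :
    ∫ ω, (∑ i ∈ Finset.Icc 1 (ℓ - 1),
        u i ω * u ℓ ω * ⟪Sg (X i ω), Sg (X ℓ ω)⟫) ^ 4 ∂P =
      3 * ((ℓ : ℝ) - 1) / ((p : ℝ) ^ 2 - 1) * Eu4 ^ 2 +
      3 * ((ℓ : ℝ) - 1) * ((ℓ : ℝ) - 2) / ((p : ℝ) - 1) ^ 2 * Eu4 * Eu2 ^ 2 :=
  statement_13_general P p n hp θ hθ X hXmeas hXsph hXindep hXid hXrot Sg hSgmeas hSg hSgunit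
    hSgperp u hu Eu2 Eu4 hEu2 hEu4 ℓ hℓ hℓn
end

section
/- Second-moment matrix of the sign vector: let p ≥ 2, θ₀ ∈ S^{p−1}, and let X be a random vector with a rotationally symmetric distribution about θ₀ on S^{p−1} such that P[X ∈ {θ₀, −θ₀}] = 0. Then E[ S(X) S(X)ᵀ ] = (1/(p−1)) (I_p − θ₀θ₀ᵀ), i.e., for all vectors a, b ∈ ℝ^p, E[ ⟨a, S(X)⟩ ⟨S(X), b⟩ ] = (⟨a,b⟩ − ⟨a,θ₀⟩⟨θ₀,b⟩)/(p−1). -/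
/-!
The sign `Y = S(X)` is almost surely a unit vector orthogonal to `θ`, and since `S` commutes with
the isometries fixing `θ`, the law of `Y` is invariant under them. Hence the second-moment form
`M(a, b) = E[⟨a, Y⟩⟨Y, b⟩]` only sees the components orthogonal to `θ`, and the reflection
exchanging two vectors of `θᗮ` of equal length gives `M(w, w) = c ‖w‖²` on `θᗮ`; by polarization
`M(a, b) = c (⟨a, b⟩ - ⟨a, θ⟩⟨θ, b⟩)`. Summing over an orthonormal basis, `1 = E‖Y‖² = c (p - 1)`.
-/

open MeasureTheory ProbabilityTheory Filter
open scoped BigOperators RealInnerProductSpace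

open Module

section

variable {E : Type*} [NormedAddCommGroup E] [InnerProductSpace ℝ E]

-- The sign `S(x)` of the paper; it is `0` when `x ∈ ℝ ∙ θ`.
noncomputable def signVector (θ x : E) : E := ‖x - ⟪x, θ⟫ • θ‖⁻¹ • (x - ⟪x, θ⟫ • θ)

lemma inner_sub_inner_smul_eq_zero {θ : E} (hθ : ‖θ‖ = 1) (x : E) :
    ⟪θ, x - ⟪x, θ⟫ • θ⟫ = 0 := by
  rw [inner_sub_right, real_inner_smul_right, real_inner_self_eq_norm_sq, hθ, real_inner_comm]
  ring

lemma inner_sub_inner_smul_sub_inner_smul {θ : E} (hθ : ‖θ‖ = 1) (a b : E) :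
    ⟪a - ⟪a, θ⟫ • θ, b - ⟪b, θ⟫ • θ⟫ = ⟪a, b⟫ - ⟪a, θ⟫ * ⟪θ, b⟫ := by
  rw [inner_sub_left, real_inner_smul_left, inner_sub_inner_smul_eq_zero hθ, mul_zero, sub_zero,
    inner_sub_right, real_inner_smul_right, real_inner_comm b θ, mul_comm]

lemma sub_inner_smul_ne_zero {θ x : E} (hθ : ‖θ‖ = 1) (hx : ‖x‖ = 1) (hxθ : x ≠ θ)
    (hxθ' : x ≠ -θ) : x - ⟪x, θ⟫ • θ ≠ 0 := by
  intro h
  rw [sub_eq_zero] at h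
  have habs : |⟪x, θ⟫| = 1 := by simpa [hθ, hx, norm_smul] using (congrArg norm h).symm
  rcases abs_eq zero_le_one |>.1 habs with h1 | h1
  · exact hxθ (by rw [h, h1, one_smul])
  · exact hxθ' (by rw [h, h1, neg_one_smul])

lemma exists_norm_eq_one_inner_eq_zero_s16 [FiniteDimensional ℝ E] (hE : 2 ≤ finrank ℝ E) (θ : E) :
    ∃ e : E, ‖e‖ = 1 ∧ ⟪e, θ⟫ = 0 := by
  have hspan : finrank ℝ (ℝ ∙ θ) ≤ 1 := by simpa using finrank_span_le_card (R := ℝ) {θ}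
  have hperp := (ℝ ∙ θ).finrank_add_finrank_orthogonal
  obtain ⟨⟨w, hw⟩, hw0⟩ := finrank_pos_iff_exists_ne_zero.1 (show 0 < finrank ℝ (ℝ ∙ θ)ᗮ by omega)
  have hw0 : w ≠ 0 := by simpa using hw0
  refine ⟨‖w‖⁻¹ • w, norm_smul_inv_norm hw0, ?_⟩
  rw [real_inner_smul_left, real_inner_comm,
    Submodule.mem_orthogonal_singleton_iff_inner_right.1 hw, mul_zero]

lemma inner_signVector {θ : E} (hθ : ‖θ‖ = 1) (x : E) : ⟪θ, signVector θ x⟫ = 0 := by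
  rw [signVector, real_inner_smul_right, inner_sub_inner_smul_eq_zero hθ, mul_zero]

lemma norm_signVector {θ x : E} (hx : x - ⟪x, θ⟫ • θ ≠ 0) : ‖signVector θ x‖ = 1 := by
  rw [signVector, norm_smul, norm_inv, norm_norm, inv_mul_cancel₀ (norm_ne_zero_iff.2 hx)]

lemma signVector_map {θ : E} (O : E ≃ₗᵢ[ℝ] E) (hO : O θ = θ) (x : E) :
    signVector θ (O x) = O (signVector θ x) := by
  have hproj : O x - ⟪O x, θ⟫ • θ = O (x - ⟪x, θ⟫ • θ) := by
    conv_lhs => rw [← hO, O.inner_map_map]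
    rw [map_sub, map_smul]
  rw [signVector, signVector, hproj, O.norm_map, map_smul]

lemma measurable_signVector [MeasurableSpace E] [BorelSpace E] (θ : E) :
    Measurable (signVector θ) := by
  have hproj : Continuous fun x : E => x - ⟪x, θ⟫ • θ := by fun_prop
  exact hproj.norm.measurable.inv.smul hproj.measurable

end

section SecondMoment

variable {E : Type*} [NormedAddCommGroup E] [InnerProductSpace ℝ E] [MeasurableSpace E]
  (μ : Measure E)

noncomputable def secondMoment (a b : E) : ℝ := ∫ y, ⟪a, y⟫ * ⟪y, b⟫ ∂μ

lemma secondMoment_sub_inner_smul {θ : E} (hμ : ∀ᵐ y ∂μ, ⟪θ, y⟫ = 0) (a b : E) :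
    secondMoment μ (a - ⟪a, θ⟫ • θ) (b - ⟪b, θ⟫ • θ) = secondMoment μ a b := by
  refine integral_congr_ae ?_
  filter_upwards [hμ] with y hy
  have hy' : ⟪y, θ⟫ = 0 := by rwa [real_inner_comm]
  simp only [inner_sub_left, inner_sub_right, real_inner_smul_left, real_inner_smul_right, hy,
    hy', mul_zero, sub_zero]

variable [BorelSpace E]

lemma integrable_inner_mul_inner [IsFiniteMeasure μ] (hμ : ∀ᵐ y ∂μ, ‖y‖ ≤ 1) (a b : E) :
    Integrable (fun y => ⟪a, y⟫ * ⟪y, b⟫) μ := by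
  refine Integrable.mono' (integrable_const (‖a‖ * ‖b‖)) (by fun_prop) ?_
  filter_upwards [hμ] with y hy
  rw [norm_mul, Real.norm_eq_abs, Real.norm_eq_abs]
  calc |⟪a, y⟫| * |⟪y, b⟫| ≤ (‖a‖ * ‖y‖) * (‖y‖ * ‖b‖) := by
        gcongr <;> exact abs_real_inner_le_norm _ _
    _ ≤ (‖a‖ * 1) * (1 * ‖b‖) := by gcongr
    _ = ‖a‖ * ‖b‖ := by ring

lemma secondMoment_map_map {O : E ≃ₗᵢ[ℝ] E} (hO : μ.map O = μ) (a b : E) :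
    secondMoment μ (O a) (O b) = secondMoment μ a b := by
  conv_lhs => rw [secondMoment, ← hO]
  rw [integral_map O.continuous.aemeasurable (by fun_prop)]
  simp only [O.inner_map_map, secondMoment]

lemma secondMoment_polarization [IsFiniteMeasure μ] (hμ : ∀ᵐ y ∂μ, ‖y‖ ≤ 1) (u v : E) :
    secondMoment μ u v =
      (secondMoment μ (u + v) (u + v) - secondMoment μ (u - v) (u - v)) / 4 := by
  simp only [secondMoment]
  rw [← integral_sub (integrable_inner_mul_inner μ hμ _ _) (integrable_inner_mul_inner μ hμ _ _),
    ← integral_div]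
  congr 1 with y
  simp only [inner_add_left, inner_add_right, inner_sub_left, inner_sub_right,
    real_inner_comm y u, real_inner_comm y v]
  ring

variable {μ}

lemma secondMoment_self_eq_of_norm_eq {θ : E}
    (hinv : ∀ O : E ≃ₗᵢ[ℝ] E, O θ = θ → μ.map O = μ) {u v : E} (hu : ⟪u, θ⟫ = 0)
    (hv : ⟪v, θ⟫ = 0) (huv : ‖u‖ = ‖v‖) : secondMoment μ u u = secondMoment μ v v := by
  set R := (ℝ ∙ (u - v))ᗮ.reflection
  have hRθ : R θ = θ := Submodule.reflection_mem_subspace_eq_self <|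
    Submodule.mem_orthogonal_singleton_iff_inner_right.2 (by rw [inner_sub_left, hu, hv, sub_zero])
  rw [← secondMoment_map_map μ (hinv R hRθ), Submodule.reflection_sub huv]

lemma secondMoment_self_eq_norm_sq_mul {θ : E}
    (hinv : ∀ O : E ≃ₗᵢ[ℝ] E, O θ = θ → μ.map O = μ) {e w : E} (he : ‖e‖ = 1)
    (heθ : ⟪e, θ⟫ = 0) (hw : ⟪w, θ⟫ = 0) :
    secondMoment μ w w = ‖w‖ ^ 2 * secondMoment μ e e := by
  rw [secondMoment_self_eq_of_norm_eq hinv hw (v := ‖w‖ • e)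
    (by rw [real_inner_smul_left, heθ, mul_zero]) (by rw [norm_smul, he, norm_norm, mul_one]),
    secondMoment, secondMoment, ← integral_const_mul]
  congr 1 with y
  rw [real_inner_smul_left, real_inner_smul_right]
  ring

lemma sum_secondMoment_orthonormalBasis [IsProbabilityMeasure μ] (hμ : ∀ᵐ y ∂μ, ‖y‖ = 1)
    {ι : Type*} [Fintype ι] (B : OrthonormalBasis ι ℝ E) :
    ∑ i, secondMoment μ (B i) (B i) = 1 := by
  have hμ' : ∀ᵐ y ∂μ, ‖y‖ ≤ 1 := hμ.mono fun y hy => hy.le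
  simp only [secondMoment]
  rw [← integral_finsetSum _ fun i _ => integrable_inner_mul_inner μ hμ' _ _]
  have hsum : ∀ᵐ y ∂μ, ∑ i, ⟪B i, y⟫ * ⟪y, B i⟫ = 1 := by
    filter_upwards [hμ] with y hy
    rw [← one_pow 2, ← hy, ← real_inner_self_eq_norm_sq, ← B.sum_inner_mul_inner]
    exact Finset.sum_congr rfl fun i _ => mul_comm _ _
  simp [integral_congr_ae hsum]

lemma secondMoment_eq_mul_inner [IsFiniteMeasure μ] {θ : E}
    (hinv : ∀ O : E ≃ₗᵢ[ℝ] E, O θ = θ → μ.map O = μ) (hμ : ∀ᵐ y ∂μ, ‖y‖ ≤ 1) {e u v : E}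
    (he : ‖e‖ = 1) (heθ : ⟪e, θ⟫ = 0) (hu : ⟪u, θ⟫ = 0) (hv : ⟪v, θ⟫ = 0) :
    secondMoment μ u v = secondMoment μ e e * ⟪u, v⟫ := by
  rw [secondMoment_polarization μ hμ,
    secondMoment_self_eq_norm_sq_mul hinv he heθ (w := u + v)
      (by rw [inner_add_left, hu, hv, add_zero]),
    secondMoment_self_eq_norm_sq_mul hinv he heθ (w := u - v)
      (by rw [inner_sub_left, hu, hv, sub_zero]),
    norm_add_sq_real, norm_sub_sq_real]
  ring

end SecondMoment

theorem secondMoment_eq_of_invariant {E : Type*} [NormedAddCommGroup E] [InnerProductSpace ℝ E]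
    [FiniteDimensional ℝ E] [MeasurableSpace E] [BorelSpace E] {μ : Measure E}
    [IsProbabilityMeasure μ] (hE : 2 ≤ finrank ℝ E) {θ : E} (hθ : ‖θ‖ = 1)
    (hinv : ∀ O : E ≃ₗᵢ[ℝ] E, O θ = θ → μ.map O = μ)
    (hμ : ∀ᵐ y ∂μ, ‖y‖ = 1 ∧ ⟪θ, y⟫ = 0) (a b : E) :
    secondMoment μ a b = (⟪a, b⟫ - ⟪a, θ⟫ * ⟪θ, b⟫) / (finrank ℝ E - 1) := by
  have hnorm : ∀ᵐ y ∂μ, ‖y‖ = 1 := hμ.mono fun y hy => hy.1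
  obtain ⟨e, he, heθ⟩ := exists_norm_eq_one_inner_eq_zero_s16 hE θ
  have hform (a b : E) :
      secondMoment μ a b = secondMoment μ e e * (⟪a, b⟫ - ⟪a, θ⟫ * ⟪θ, b⟫) := by
    have hperp (x : E) : ⟪x - ⟪x, θ⟫ • θ, θ⟫ = 0 := by
      rw [real_inner_comm, inner_sub_inner_smul_eq_zero hθ]
    rw [← inner_sub_inner_smul_sub_inner_smul hθ,
      ← secondMoment_sub_inner_smul μ (hμ.mono fun y hy => hy.2),
      secondMoment_eq_mul_inner hinv (hnorm.mono fun y hy => hy.le) he heθ (hperp a) (hperp b)]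
  have htrace : secondMoment μ e e * (finrank ℝ E - 1) = 1 := by
    set B := stdOrthonormalBasis ℝ E
    have hBB : ∑ i, ⟪B i, B i⟫ = finrank ℝ E := by
      simp [B.orthonormal.1]
    have hθθ : ∑ i, ⟪B i, θ⟫ * ⟪θ, B i⟫ = 1 := by
      rw [← one_pow 2, ← hθ, ← real_inner_self_eq_norm_sq, ← B.sum_inner_mul_inner]
      exact Finset.sum_congr rfl fun i _ => by rw [real_inner_comm]
    calc secondMoment μ e e * (finrank ℝ E - 1) = ∑ i, secondMoment μ (B i) (B i) := by
          rw [Finset.sum_congr rfl fun i _ => hform (B i) (B i), ← Finset.mul_sum,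
            Finset.sum_sub_distrib, hBB, hθθ]
      _ = 1 := sum_secondMoment_orthonormalBasis hnorm B
  have hn : (finrank ℝ E : ℝ) - 1 ≠ 0 := right_ne_zero_of_mul_eq_one htrace
  rw [hform, eq_div_iff hn, mul_right_comm, htrace, one_mul]

section Law

variable {E : Type*} [NormedAddCommGroup E] [InnerProductSpace ℝ E] [MeasurableSpace E]
  [BorelSpace E] {μ : Measure E} {θ : E}

lemma map_map_signVector {O : E ≃ₗᵢ[ℝ] E} (hO : O θ = θ) (hμ : μ.map O = μ) :
    (μ.map (signVector θ)).map O = μ.map (signVector θ) := by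
  have hmeas := measurable_signVector (E := E) θ
  conv_rhs => rw [← hμ]
  rw [Measure.map_map O.continuous.measurable hmeas, Measure.map_map hmeas O.continuous.measurable]
  congr 1
  funext x
  exact (signVector_map O hO x).symm

lemma ae_map_signVector (hθ : ‖θ‖ = 1) (hμ : ∀ᵐ x ∂μ, x - ⟪x, θ⟫ • θ ≠ 0) :
    ∀ᵐ y ∂μ.map (signVector θ), ‖y‖ = 1 ∧ ⟪θ, y⟫ = 0 := by
  have hset : MeasurableSet {y : E | ‖y‖ = 1 ∧ ⟪θ, y⟫ = 0} :=
    (measurableSet_eq_fun (by fun_prop) measurable_const).inter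
      (measurableSet_eq_fun (by fun_prop) measurable_const)
  rw [ae_map_iff (measurable_signVector θ).aemeasurable hset]
  exact hμ.mono fun x hx => ⟨norm_signVector hx, inner_signVector hθ x⟩

end Law

/-- Second-moment matrix of the sign vector: if `X` is rotationally symmetric about `θ₀` on
`S^{p−1}` with `P[X ∈ {θ₀,−θ₀}] = 0`, then `E[S(X)S(X)ᵀ] = (1/(p−1))(I − θ₀θ₀ᵀ)`, i.e. for all
`a, b ∈ ℝ^p`, `E[⟨a,S(X)⟩⟨S(X),b⟩] = (⟨a,b⟩ − ⟨a,θ₀⟩⟨θ₀,b⟩)/(p−1)`. -/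
theorem statement_16
    {Ω : Type*} [MeasurableSpace Ω] (P : Measure Ω) [IsProbabilityMeasure P]
    (p : ℕ) (hp : 2 ≤ p)
    (θ : EuclideanSpace ℝ (Fin p)) (hθ : ‖θ‖ = 1)
    (X : Ω → EuclideanSpace ℝ (Fin p))
    (hXmeas : Measurable X)
    (hXsph : ∀ ω, ‖X ω‖ = 1)
    (hXrot : RotSym θ (Measure.map X P))
    (hXne : P {ω | X ω = θ ∨ X ω = -θ} = 0)
    -- the sign map `Sg`: a fixed measurable choice, equal to the normalized projection of `x`
    -- on the orthogonal complement of `θ` whenever `x ≠ ±θ`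
    (Sg : EuclideanSpace ℝ (Fin p) → EuclideanSpace ℝ (Fin p))
    (hSgmeas : Measurable Sg)
    (hSg : ∀ x, x - ⟪x, θ⟫ • θ ≠ 0 →
      Sg x = ‖x - ⟪x, θ⟫ • θ‖⁻¹ • (x - ⟪x, θ⟫ • θ)) :
    ∀ a b : EuclideanSpace ℝ (Fin p),
      ∫ ω, ⟪a, Sg (X ω)⟫ * ⟪Sg (X ω), b⟫ ∂P =
        (⟪a, b⟫ - ⟪a, θ⟫ * ⟪θ, b⟫) / ((p : ℝ) - 1) := by
  intro a b
  have hproj : ∀ᵐ x ∂P.map X, x - ⟪x, θ⟫ • θ ≠ 0 := by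
    have hset : MeasurableSet {x : EuclideanSpace ℝ (Fin p) | x - ⟪x, θ⟫ • θ ≠ 0} :=
      (measurableSet_eq_fun (by fun_prop) measurable_const).compl
    rw [ae_map_iff hXmeas.aemeasurable hset]
    filter_upwards [measure_eq_zero_iff_ae_notMem.1 hXne] with ω hω
    exact sub_inner_smul_ne_zero hθ (hXsph ω) (fun h => hω (Or.inl h)) (fun h => hω (Or.inr h))
  have hlaw : P.map (Sg ∘ X) = (P.map X).map (signVector θ) := by
    rw [← Measure.map_map hSgmeas hXmeas]
    exact Measure.map_congr (hproj.mono hSg)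
  have := Measure.isProbabilityMeasure_map (μ := P) (hSgmeas.comp hXmeas).aemeasurable
  have hmoment := secondMoment_eq_of_invariant (μ := P.map (Sg ∘ X)) (by simpa using hp) hθ
    (by rw [hlaw]; exact fun O hO => map_map_signVector hO (hXrot O hO))
    (by rw [hlaw]; exact ae_map_signVector hθ hproj) a b
  rwa [finrank_euclideanSpace_fin, secondMoment,
    integral_map (hSgmeas.comp hXmeas).aemeasurable (by fun_prop)] at hmoment
end
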